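/- arXiv:1103.3281 — 5 statements merged into one kernel-verified Lean document; each statement's English description precedes it below -/
import Mathlib

section
/- Let E be a finite set with |E| ≥ 2 and μ a nonnegative function on subsets of E with μ(∅) > 0. Then μ is Rayleigh if and only if for every e ∈ E the cavity ratio Γ^e_μ is non-increasing in each of its variables on the positive orthant (0,∞)^{E∖{e}}. -/
open Finset Filter
open scoped Classical ENNReal

section LocalDefs

variable {V : Type*} [DecidableEq V]

/-- Generating polynomial `Z(w) = Σ_{S ⊆ A} ν(S) ∏_{k∈S} w_k` of a measure `ν`
on the subsets of the ground set `A`. -/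
noncomputable def lZ (A : Finset V) (ν : Finset V → ℝ) (w : V → ℝ) : ℝ :=
  ∑ S ∈ A.powerset, ν S * ∏ k ∈ S, w k

/-- Gibbs--Boltzmann probability of the event `p` under external field `w`. -/
noncomputable def lProb (A : Finset V) (ν : Finset V → ℝ) (w : V → ℝ)
    (p : Finset V → Prop) : ℝ :=
  (∑ S ∈ A.powerset.filter p, ν S * ∏ k ∈ S, w k) / lZ A ν w

/-- The energy `U_ν(w)`, i.e. the expected cardinality of the random subset. -/
noncomputable def lEnergy (A : Finset V) (ν : Finset V → ℝ) (w : V → ℝ) : ℝ :=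
  (∑ S ∈ A.powerset, (S.card : ℝ) * ν S * ∏ k ∈ S, w k) / lZ A ν w

/-- `E^w_ν[|𝓕|·1_{e∈𝓕}]`. -/
noncomputable def lEnergyIn (A : Finset V) (ν : Finset V → ℝ) (e : V) (w : V → ℝ) : ℝ :=
  (∑ S ∈ A.powerset.filter (fun S => e ∈ S), (S.card : ℝ) * ν S * ∏ k ∈ S, w k) / lZ A ν w

/-- The cavity ratio `Γ^e_ν(w') = Z^{/e}(w') / Z^{∖e}(w')`; it only depends on the
coordinates of `w` different from `e`. -/
noncomputable def lGamma (A : Finset V) (ν : Finset V → ℝ) (e : V) (w : V → ℝ) : ℝ :=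
  (∑ S ∈ (A.erase e).powerset, ν (insert e S) * ∏ k ∈ S, w k) /
  (∑ S ∈ (A.erase e).powerset, ν S * ∏ k ∈ S, w k)

/-- Rayleigh property: pairwise negative correlation under every positive external field. -/
def lRayleigh (A : Finset V) (ν : Finset V → ℝ) : Prop :=
  ∀ w : V → ℝ, (∀ k ∈ A, 0 < w k) → ∀ e ∈ A, ∀ f ∈ A, e ≠ f →
    lProb A ν w (fun S => e ∈ S ∧ f ∈ S) ≤
      lProb A ν w (fun S => e ∈ S) * lProb A ν w (fun S => f ∈ S)

/-- Size-increasing property: every ground element positively influences the total size. -/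
def lSizeInc (A : Finset V) (ν : Finset V → ℝ) : Prop :=
  ∀ w : V → ℝ, (∀ k ∈ A, 0 < w k) → ∀ e ∈ A,
    lEnergy A ν w * lProb A ν w (fun S => e ∈ S) < lEnergyIn A ν e w

/-- Cavity-monotone: nonnegative, `ν(∅) > 0`, Rayleigh and size-increasing. -/
def lCavityMonotone (A : Finset V) (ν : Finset V → ℝ) : Prop :=
  (∀ S ∈ A.powerset, 0 ≤ ν S) ∧ 0 < ν ∅ ∧ lRayleigh A ν ∧ lSizeInc A ν

end LocalDefs


section Proof

variable {E : Type*} [Fintype E] [DecidableEq E]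

private lemma aux_mem_sum (x : E) (Q : Finset E) (hx : x ∉ Q)
    (p : Finset E → Prop) [DecidablePred p] (g : Finset E → ℝ) :
    ∑ S ∈ (insert x Q).powerset.filter (fun S => x ∈ S ∧ p S), g S
      = ∑ T ∈ Q.powerset.filter (fun T => p (insert x T)), g (insert x T) := by
  refine Finset.sum_nbij' (i := fun S => S.erase x) (j := fun T => insert x T)
    ?_ ?_ ?_ ?_ ?_
  · intro S hS
    simp only [Finset.mem_filter, Finset.mem_powerset] at hS ⊢
    obtain ⟨hsub, hxS, hp⟩ := hS
    refine ⟨fun a ha => ?_, by rwa [Finset.insert_erase hxS]⟩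
    have h2 := hsub (Finset.mem_of_mem_erase ha)
    rcases Finset.mem_insert.1 h2 with h | h
    · exact absurd h (Finset.ne_of_mem_erase ha)
    · exact h
  · intro T hT
    simp only [Finset.mem_filter, Finset.mem_powerset] at hT ⊢
    exact ⟨Finset.insert_subset_insert x hT.1, Finset.mem_insert_self _ _, hT.2⟩
  · intro S hS
    simp only [Finset.mem_filter] at hS
    exact Finset.insert_erase hS.2.1
  · intro T hT
    simp only [Finset.mem_filter, Finset.mem_powerset] at hT
    exact Finset.erase_insert (fun hxT => hx (hT.1 hxT))
  · intro S hS
    simp only [Finset.mem_filter] at hS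
    rw [Finset.insert_erase hS.2.1]

private lemma aux_master (x : E) (Q : Finset E) (hx : x ∉ Q)
    (p : Finset E → Prop) [DecidablePred p] (g : Finset E → ℝ) :
    ∑ S ∈ (insert x Q).powerset.filter p, g S
      = ∑ T ∈ Q.powerset.filter p, g T
        + ∑ T ∈ Q.powerset.filter (fun T => p (insert x T)), g (insert x T) := by
  rw [← Finset.sum_filter_add_sum_filter_not ((insert x Q).powerset.filter p)
    (fun S => x ∈ S), Finset.filter_filter, Finset.filter_filter]
  have h1 : (insert x Q).powerset.filter (fun S => p S ∧ x ∈ S)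
      = (insert x Q).powerset.filter (fun S => x ∈ S ∧ p S) := by
    apply Finset.filter_congr; intro S _; constructor <;> (intro h; tauto)
  have h2 : (insert x Q).powerset.filter (fun S => p S ∧ x ∉ S)
      = Q.powerset.filter p := by
    ext S
    simp only [Finset.mem_filter, Finset.mem_powerset]
    constructor
    · rintro ⟨hsub, hp, hxS⟩
      exact ⟨(Finset.subset_insert_iff_of_notMem hxS).1 hsub, hp⟩
    · rintro ⟨hsub, hp⟩
      exact ⟨hsub.trans (Finset.subset_insert _ _), hp, fun h => hx (hsub h)⟩
  rw [h1, h2, aux_mem_sum x Q hx p g, add_comm]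

/-- The four coefficient polynomials, indexed by `F ⊆ {e,f}`. -/
noncomputable def cS (μ : Finset E → ℝ) (e f : E) (F : Finset E) (w : E → ℝ) : ℝ :=
  ∑ T ∈ (((Finset.univ : Finset E).erase e).erase f).powerset,
    μ (F ∪ T) * ∏ k ∈ T, w k

private lemma cS_nonneg (μ : Finset E → ℝ) (hnn : ∀ F : Finset E, 0 ≤ μ F)
    (e f : E) (F : Finset E) (w : E → ℝ) (hw : ∀ k, 0 < w k) :
    0 ≤ cS μ e f F w := by
  apply Finset.sum_nonneg
  intro T _
  exact mul_nonneg (hnn _) (Finset.prod_nonneg fun k _ => (hw k).le)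

private lemma cS_empty_pos (μ : Finset E → ℝ) (hnn : ∀ F : Finset E, 0 ≤ μ F)
    (h0 : 0 < μ ∅) (e f : E) (w : E → ℝ) (hw : ∀ k, 0 < w k) :
    0 < cS μ e f ∅ w := by
  apply Finset.sum_pos'
  · intro T _
    exact mul_nonneg (hnn _) (Finset.prod_nonneg fun k _ => (hw k).le)
  · exact ⟨∅, Finset.empty_mem_powerset _, by simpa using h0⟩

private lemma cS_update (μ : Finset E → ℝ) (e f : E) (F : Finset E) (w : E → ℝ) (t : ℝ) :
    cS μ e f F (Function.update w f t) = cS μ e f F w := by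
  apply Finset.sum_congr rfl
  intro T hT
  congr 1
  apply Finset.prod_congr rfl
  intro k hk
  have hkP := Finset.mem_powerset.1 hT hk
  exact Function.update_of_ne (Finset.ne_of_mem_erase hkP) t w

section Decomp

variable (μ : Finset E → ℝ) {e f : E} (w : E → ℝ)

private lemma haux_f (hef : e ≠ f) : f ∈ (Finset.univ : Finset E).erase e :=
  Finset.mem_erase.2 ⟨hef.symm, Finset.mem_univ f⟩

private lemma haux_univ (hef : e ≠ f) :
    (Finset.univ : Finset E)
      = insert e (insert f (((Finset.univ : Finset E).erase e).erase f)) := by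
  rw [Finset.insert_erase (haux_f hef), Finset.insert_erase (Finset.mem_univ e)]

private lemma haux_enP (hef : e ≠ f) : e ∉ insert f (((Finset.univ : Finset E).erase e).erase f) := by
  simp [hef]

private lemma haux_fnP : f ∉ ((Finset.univ : Finset E).erase e).erase f := by
  simp

-- termwise conversions
private lemma term_empty :
    ∑ T ∈ (((Finset.univ : Finset E).erase e).erase f).powerset, μ T * ∏ k ∈ T, w k
      = cS μ e f ∅ w := by
  simp [cS]

private lemma term_e :
    ∑ T ∈ (((Finset.univ : Finset E).erase e).erase f).powerset,
        μ (insert e T) * ∏ k ∈ insert e T, w k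
      = w e * cS μ e f {e} w := by
  rw [cS, Finset.mul_sum]
  apply Finset.sum_congr rfl
  intro T hT
  have hT' := Finset.mem_powerset.1 hT
  have heT : e ∉ T := fun h => by
    have := hT' h; simp at this
  rw [Finset.prod_insert heT]
  have hu : ({e} : Finset E) ∪ T = insert e T := by ext a; simp
  rw [hu]
  ring

private lemma term_f :
    ∑ T ∈ (((Finset.univ : Finset E).erase e).erase f).powerset,
        μ (insert f T) * ∏ k ∈ insert f T, w k
      = w f * cS μ e f {f} w := by
  rw [cS, Finset.mul_sum]
  apply Finset.sum_congr rfl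
  intro T hT
  have hT' := Finset.mem_powerset.1 hT
  have hfT : f ∉ T := fun h => by
    have := hT' h; simp at this
  rw [Finset.prod_insert hfT]
  have hu : ({f} : Finset E) ∪ T = insert f T := by ext a; simp
  rw [hu]
  ring

private lemma term_ef (hef : e ≠ f) :
    ∑ T ∈ (((Finset.univ : Finset E).erase e).erase f).powerset,
        μ (insert e (insert f T)) * ∏ k ∈ insert e (insert f T), w k
      = w e * w f * cS μ e f {e, f} w := by
  rw [cS, Finset.mul_sum]
  apply Finset.sum_congr rfl
  intro T hT
  have hT' := Finset.mem_powerset.1 hT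
  have hfT : f ∉ T := fun h => by
    have := hT' h; simp at this
  have heT : e ∉ insert f T := by
    simp only [Finset.mem_insert]
    rintro (h | h)
    · exact hef h
    · have := hT' h; simp at this
  rw [Finset.prod_insert heT, Finset.prod_insert hfT]
  have hu : ({e, f} : Finset E) ∪ T = insert e (insert f T) := by
    ext a; simp
  rw [hu]
  ring

private lemma Z_eq (hef : e ≠ f) :
    lZ (Finset.univ : Finset E) μ w
      = cS μ e f ∅ w + w e * cS μ e f {e} w + w f * cS μ e f {f} w
        + w e * w f * cS μ e f {e, f} w := by
  rw [lZ, haux_univ hef, Finset.sum_powerset_insert (haux_enP hef),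
    Finset.sum_powerset_insert (haux_fnP (e := e)),
    Finset.sum_powerset_insert (haux_fnP (e := e)),
    term_empty μ w, term_f μ w, term_e μ w, term_ef μ w hef]
  ring

private lemma numEF_eq (hef : e ≠ f) :
    ∑ S ∈ (Finset.univ : Finset E).powerset.filter (fun S => e ∈ S ∧ f ∈ S),
        μ S * ∏ k ∈ S, w k
      = w e * w f * cS μ e f {e, f} w := by
  rw [haux_univ hef (E := E),
    aux_master e _ (haux_enP hef) (fun S => e ∈ S ∧ f ∈ S)]
  have h1 : (insert f (((Finset.univ : Finset E).erase e).erase f)).powerset.filter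
      (fun T => e ∈ T ∧ f ∈ T) = ∅ := by
    apply Finset.filter_false_of_mem
    intro T hT
    have hT' := Finset.mem_powerset.1 hT
    rintro ⟨h, -⟩
    exact haux_enP hef (hT' h)
  have h2 : (insert f (((Finset.univ : Finset E).erase e).erase f)).powerset.filter
      (fun T => e ∈ insert e T ∧ f ∈ insert e T)
      = (insert f (((Finset.univ : Finset E).erase e).erase f)).powerset.filter
        (fun T => f ∈ T) := by
    apply Finset.filter_congr
    intro T _
    simp [hef.symm]
  rw [h1, h2, Finset.sum_empty, zero_add]
  have h3 : ∀ g : Finset E → ℝ,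
      ∑ T ∈ (insert f (((Finset.univ : Finset E).erase e).erase f)).powerset.filter
        (fun T => f ∈ T), g T
      = ∑ T ∈ (((Finset.univ : Finset E).erase e).erase f).powerset, g (insert f T) := by
    intro g
    rw [aux_master f _ (haux_fnP (e := e)) (fun T => f ∈ T) g]
    have h4 : ((((Finset.univ : Finset E).erase e).erase f)).powerset.filter
        (fun T => f ∈ T) = ∅ := by
      apply Finset.filter_false_of_mem
      intro T hT h
      exact haux_fnP (e := e) (Finset.mem_powerset.1 hT h)
    have h5 : ((((Finset.univ : Finset E).erase e).erase f)).powerset.filter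
        (fun T => f ∈ insert f T)
        = ((((Finset.univ : Finset E).erase e).erase f)).powerset := by
      apply Finset.filter_true_of_mem
      intro T _
      exact Finset.mem_insert_self _ _
    rw [h4, h5, Finset.sum_empty, zero_add]
  rw [h3, term_ef μ w hef]

private lemma numE_eq (hef : e ≠ f) :
    ∑ S ∈ (Finset.univ : Finset E).powerset.filter (fun S => e ∈ S),
        μ S * ∏ k ∈ S, w k
      = w e * cS μ e f {e} w + w e * w f * cS μ e f {e, f} w := by
  rw [haux_univ hef (E := E), aux_master e _ (haux_enP hef) (fun S => e ∈ S)]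
  have h1 : (insert f (((Finset.univ : Finset E).erase e).erase f)).powerset.filter
      (fun T => e ∈ T) = ∅ := by
    apply Finset.filter_false_of_mem
    intro T hT h
    exact haux_enP hef (Finset.mem_powerset.1 hT h)
  have h2 : (insert f (((Finset.univ : Finset E).erase e).erase f)).powerset.filter
      (fun T => e ∈ insert e T)
      = (insert f (((Finset.univ : Finset E).erase e).erase f)).powerset := by
    apply Finset.filter_true_of_mem
    intro T _
    exact Finset.mem_insert_self _ _
  rw [h1, h2, Finset.sum_empty, zero_add,
    Finset.sum_powerset_insert (haux_fnP (e := e)), term_e μ w, term_ef μ w hef]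

private lemma numF_eq (hef : e ≠ f) :
    ∑ S ∈ (Finset.univ : Finset E).powerset.filter (fun S => f ∈ S),
        μ S * ∏ k ∈ S, w k
      = w f * cS μ e f {f} w + w e * w f * cS μ e f {e, f} w := by
  rw [haux_univ hef (E := E), aux_master e _ (haux_enP hef) (fun S => f ∈ S)]
  have h2 : (insert f (((Finset.univ : Finset E).erase e).erase f)).powerset.filter
      (fun T => f ∈ insert e T)
      = (insert f (((Finset.univ : Finset E).erase e).erase f)).powerset.filter
        (fun T => f ∈ T) := by
    apply Finset.filter_congr
    intro T _
    simp [hef.symm]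
  rw [h2]
  have h3 : ∀ g : Finset E → ℝ,
      ∑ T ∈ (insert f (((Finset.univ : Finset E).erase e).erase f)).powerset.filter
        (fun T => f ∈ T), g T
      = ∑ T ∈ (((Finset.univ : Finset E).erase e).erase f).powerset, g (insert f T) := by
    intro g
    rw [aux_master f _ (haux_fnP (e := e)) (fun T => f ∈ T) g]
    have h4 : ((((Finset.univ : Finset E).erase e).erase f)).powerset.filter
        (fun T => f ∈ T) = ∅ := by
      apply Finset.filter_false_of_mem
      intro T hT h
      exact haux_fnP (e := e) (Finset.mem_powerset.1 hT h)
    have h5 : ((((Finset.univ : Finset E).erase e).erase f)).powerset.filter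
        (fun T => f ∈ insert f T)
        = ((((Finset.univ : Finset E).erase e).erase f)).powerset := by
      apply Finset.filter_true_of_mem
      intro T _
      exact Finset.mem_insert_self _ _
    rw [h4, h5, Finset.sum_empty, zero_add]
  rw [h3, h3, term_f μ w, term_ef μ w hef]

private lemma gamma_eq (hef : e ≠ f) (t : ℝ) :
    lGamma (Finset.univ : Finset E) μ e (Function.update w f t)
      = (cS μ e f {e} w + t * cS μ e f {e, f} w)
        / (cS μ e f ∅ w + t * cS μ e f {f} w) := by
  have hP : (Finset.univ : Finset E).erase e
      = insert f (((Finset.univ : Finset E).erase e).erase f) :=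
    (Finset.insert_erase (haux_f hef)).symm
  rw [lGamma, hP, Finset.sum_powerset_insert (haux_fnP (e := e)),
    Finset.sum_powerset_insert (haux_fnP (e := e))]
  congr 1
  · rw [cS_update μ e f {e} w t |>.symm, cS_update μ e f {e,f} w t |>.symm]
    have hnum : ∑ T ∈ (((Finset.univ : Finset E).erase e).erase f).powerset,
        μ (insert e T) * ∏ k ∈ T, Function.update w f t k
        = cS μ e f {e} (Function.update w f t) := by
      simp only [cS]
      apply Finset.sum_congr rfl
      intro T _
      have hu : ({e} : Finset E) ∪ T = insert e T := by ext a; simp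
      rw [hu]
    rw [hnum]
    have hnum2 : ∑ T ∈ (((Finset.univ : Finset E).erase e).erase f).powerset,
        μ (insert e (insert f T)) * ∏ k ∈ insert f T, Function.update w f t k
        = t * cS μ e f {e, f} (Function.update w f t) := by
      rw [cS, Finset.mul_sum]
      apply Finset.sum_congr rfl
      intro T hT
      have hfT : f ∉ T := fun h => haux_fnP (e := e) (Finset.mem_powerset.1 hT h)
      rw [Finset.prod_insert hfT, Function.update_self]
      have hu : ({e, f} : Finset E) ∪ T = insert e (insert f T) := by
        ext a; simp
      rw [hu]
      ring
    rw [hnum2]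
  · rw [cS_update μ e f ∅ w t |>.symm, cS_update μ e f {f} w t |>.symm]
    have hden : ∑ T ∈ (((Finset.univ : Finset E).erase e).erase f).powerset,
        μ T * ∏ k ∈ T, Function.update w f t k
        = cS μ e f ∅ (Function.update w f t) := by
      simp [cS]
    rw [hden]
    have hden2 : ∑ T ∈ (((Finset.univ : Finset E).erase e).erase f).powerset,
        μ (insert f T) * ∏ k ∈ insert f T, Function.update w f t k
        = t * cS μ e f {f} (Function.update w f t) := by
      rw [cS, Finset.mul_sum]
      apply Finset.sum_congr rfl
      intro T hT
      have hfT : f ∉ T := fun h => haux_fnP (e := e) (Finset.mem_powerset.1 hT h)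
      rw [Finset.prod_insert hfT, Function.update_self]
      have hu : ({f} : Finset E) ∪ T = insert f T := by ext a; simp
      rw [hu]
      ring
    rw [hden2]

end Decomp

section Bridge

variable (μ : Finset E → ℝ)

private lemma ray_iff (hnn : ∀ F : Finset E, 0 ≤ μ F) (h0 : 0 < μ ∅)
    {e f : E} (hef : e ≠ f) (w : E → ℝ) (hw : ∀ k, 0 < w k) :
    (lProb (Finset.univ : Finset E) μ w (fun S => e ∈ S ∧ f ∈ S) ≤
       lProb (Finset.univ : Finset E) μ w (fun S => e ∈ S) *
         lProb (Finset.univ : Finset E) μ w (fun S => f ∈ S)) ↔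
      cS μ e f {e, f} w * cS μ e f ∅ w ≤ cS μ e f {e} w * cS μ e f {f} w := by
  have hA := cS_nonneg μ hnn e f {e} w hw
  have hB := cS_nonneg μ hnn e f {e, f} w hw
  have hC := cS_empty_pos μ hnn h0 e f w hw
  have hD := cS_nonneg μ hnn e f {f} w hw
  have hwe := hw e
  have hwf := hw f
  have hZ : lZ (Finset.univ : Finset E) μ w
      = cS μ e f ∅ w + w e * cS μ e f {e} w + w f * cS μ e f {f} w
        + w e * w f * cS μ e f {e, f} w := Z_eq μ w hef
  have hZ0 : 0 < lZ (Finset.univ : Finset E) μ w := by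
    rw [hZ]
    have h1 : 0 ≤ w e * cS μ e f {e} w := mul_nonneg hwe.le hA
    have h2 : 0 ≤ w f * cS μ e f {f} w := mul_nonneg hwf.le hD
    have h3 : 0 ≤ w e * w f * cS μ e f {e, f} w :=
      mul_nonneg (mul_nonneg hwe.le hwf.le) hB
    linarith
  have hcv : ∀ (p : Finset E → Prop) [DecidablePred p],
      @Finset.filter (Finset E) p (fun S => Classical.propDecidable _)
          (Finset.univ : Finset E).powerset
        = (Finset.univ : Finset E).powerset.filter p :=
    fun p _ => Finset.filter_congr_decidable _ _ _
  rw [lProb, lProb, lProb, hcv (fun S => e ∈ S ∧ f ∈ S), hcv (fun S => e ∈ S),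
    hcv (fun S => f ∈ S), numEF_eq μ w hef, numE_eq μ w hef, numF_eq μ w hef,
    div_mul_div_comm, div_le_div_iff₀ hZ0 (mul_pos hZ0 hZ0), hZ]
  set A := cS μ e f {e} w
  set B := cS μ e f {e, f} w
  set C := cS μ e f ∅ w
  set D := cS μ e f {f} w
  have hZ0' : 0 < C + w e * A + w f * D + w e * w f * B := by rw [hZ] at hZ0; exact hZ0
  constructor
  · intro h
    nlinarith [h, mul_pos (mul_pos hwe hwf) hZ0', hZ0']
  · intro h
    nlinarith [mul_nonneg (mul_pos (mul_pos hwe hwf) hZ0').le (sub_nonneg.2 h)]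

end Bridge

end Proof

/-- for `|E| ≥ 2` and `μ(∅) > 0`, `μ` is Rayleigh iff every cavity ratio
`Γ^e_μ` is non-increasing in each of its variables on the positive orthant. -/
theorem stmt1 {E : Type*} [Fintype E] [DecidableEq E] (hcard : 2 ≤ Fintype.card E)
    (μ : Finset E → ℝ) (hnn : ∀ F : Finset E, 0 ≤ μ F) (h0 : 0 < μ ∅) :
    lRayleigh (Finset.univ : Finset E) μ ↔
      ∀ e f : E, f ≠ e → ∀ w : E → ℝ, (∀ g, 0 < w g) → ∀ s t : ℝ, 0 < s → s ≤ t →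
        lGamma (Finset.univ : Finset E) μ e (Function.update w f t) ≤
          lGamma (Finset.univ : Finset E) μ e (Function.update w f s) := by
  constructor
  · intro hR e f hfe w hw s t hs hst
    have hef : e ≠ f := hfe.symm
    have hw' : ∀ k ∈ (Finset.univ : Finset E), 0 < w k := fun k _ => hw k
    have hkey : cS μ e f {e, f} w * cS μ e f ∅ w ≤ cS μ e f {e} w * cS μ e f {f} w :=
      (ray_iff μ hnn h0 hef w hw).1
        (hR w hw' e (Finset.mem_univ e) f (Finset.mem_univ f) hef)
    rw [gamma_eq μ w hef t, gamma_eq μ w hef s]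
    have hB := cS_nonneg μ hnn e f {e, f} w hw
    have hC := cS_empty_pos μ hnn h0 e f w hw
    have hD := cS_nonneg μ hnn e f {f} w hw
    have ht : 0 < t := lt_of_lt_of_le hs hst
    have hden_s : 0 < cS μ e f ∅ w + s * cS μ e f {f} w := by nlinarith
    have hden_t : 0 < cS μ e f ∅ w + t * cS μ e f {f} w := by nlinarith
    rw [div_le_div_iff₀ hden_t hden_s]
    nlinarith [mul_nonneg (sub_nonneg.2 hst) (sub_nonneg.2 hkey)]
  · intro hG w hw e _ f _ hef
    have hw' : ∀ k, 0 < w k := fun k => hw k (Finset.mem_univ k)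
    apply (ray_iff μ hnn h0 hef w hw').2
    have h12 := hG e f hef.symm w hw' 1 2 one_pos one_le_two
    rw [gamma_eq μ w hef 2, gamma_eq μ w hef 1] at h12
    have hC := cS_empty_pos μ hnn h0 e f w hw'
    have hD := cS_nonneg μ hnn e f {f} w hw'
    have hd1 : 0 < cS μ e f ∅ w + 1 * cS μ e f {f} w := by linarith
    have hd2 : 0 < cS μ e f ∅ w + 2 * cS μ e f {f} w := by linarith
    rw [div_le_div_iff₀ hd2 hd1] at h12
    nlinarith [h12]
end

section
/- Let E be a finite set with m := |E| ≥ 1 and let μ be an exchangeable nonnegative function on subsets of E, i.e. μ(F) = c(|F|) for a nonnegative sequence c(0), …, c(m), not all zero. Then μ is cavity-monotone if and only if (1) c is log-concave, i.e. c(k)² ≥ c(k−1)c(k+1) for all 0 < k < m, and (2) the support {0 ≤ k ≤ m : c(k) > 0} is an interval of integers containing both 0 and 1. -/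
open Finset Filter
open scoped Classical ENNReal

/-!
Write `Z_r(C) = ∑_{S ⊆ C} c(|S| + r) u^S` (`shiftZ`). For an exchangeable `μ`, the Rayleigh
inequality for `e ≠ f` is equivalent to `Z_0 Z_2 ≤ Z_1²` on `C = E ∖ {e, f}`, and the
size-increasing inequality at `e` to `Z_0(c) Z_1(k c) > Z_0(k c) Z_1(c)` on `E ∖ {e}`. Adding an
element `v` to `C` acts by `Z_r ↦ Z_r + u_v Z_{r+1}`, so by induction on `C` both inequalities
follow from their instances at `C = ∅`: `c(r) c(s+2) ≤ c(r+1) c(s+1)` for `r ≤ s`, which is where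
log-concavity without internal zeros enters, and `c(0) c(1) > 0`.

Conversely, an external field equal to a large `τ` (or `τ^a`) on a set `P` and to `τ⁻¹` elsewhere
makes the terms with `S` near `P` dominate, which turns a failure of log-concavity at `|P| + 1`,
or a gap in the support just after `|P|`, into a failure of `Z_0 Z_2 ≤ Z_1²`. Finally,
size-increase at `w ≡ 1` rules out `c` vanishing on `[1, m]`, i.e. forces `c(1) > 0`.
-/

namespace Exchangeable

variable {V : Type*}

noncomputable def shiftZ (c : ℕ → ℝ) (A : Finset V) (r : ℕ) (u : V → ℝ) : ℝ :=
  ∑ S ∈ A.powerset, c (S.card + r) * ∏ k ∈ S, u k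

@[simp]
lemma shiftZ_empty (c : ℕ → ℝ) (r : ℕ) (u : V → ℝ) : shiftZ c (∅ : Finset V) r u = c r := by
  simp [shiftZ]

lemma shiftZ_insert [DecidableEq V] (c : ℕ → ℝ) {A : Finset V} {v : V} (hv : v ∉ A) (r : ℕ)
    (u : V → ℝ) :
    shiftZ c (insert v A) r u = shiftZ c A r u + u v * shiftZ c A (r + 1) u := by
  rw [shiftZ, sum_powerset_insert hv, shiftZ, shiftZ, mul_sum]
  congr 1
  refine sum_congr rfl fun S hS => ?_
  have hvS : v ∉ S := fun h => hv (mem_powerset.mp hS h)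
  rw [card_insert_of_notMem hvS, prod_insert hvS, Nat.add_right_comm, add_assoc]
  ring

lemma shiftZ_erase [DecidableEq V] (c : ℕ → ℝ) {A : Finset V} {v : V} (hv : v ∈ A) (r : ℕ)
    (u : V → ℝ) :
    shiftZ c A r u = shiftZ c (A.erase v) r u + u v * shiftZ c (A.erase v) (r + 1) u := by
  conv_lhs => rw [← insert_erase hv]
  exact shiftZ_insert c (notMem_erase v A) r u

lemma shiftZ_nonneg {c : ℕ → ℝ} {A : Finset V} {r m : ℕ} {u : V → ℝ}
    (hc : ∀ k ≤ m, 0 ≤ c k) (hA : A.card + r ≤ m) (hu : ∀ k ∈ A, 0 ≤ u k) :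
    0 ≤ shiftZ c A r u :=
  sum_nonneg fun S hS =>
    have hSA := mem_powerset.mp hS
    mul_nonneg (hc _ (by grw [card_le_card hSA]; exact hA))
      (prod_nonneg fun k hk => hu k (hSA hk))

lemma shiftZ_zero_pos {c : ℕ → ℝ} {A : Finset V} {u : V → ℝ}
    (hc : ∀ k ≤ A.card, 0 ≤ c k) (hc0 : 0 < c 0) (hu : ∀ k ∈ A, 0 < u k) :
    0 < shiftZ c A 0 u :=
  sum_pos' (fun S hS => mul_nonneg (hc _ (card_le_card (mem_powerset.mp hS)))
      (prod_nonneg fun k hk => (hu k (mem_powerset.mp hS hk)).le))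
    ⟨∅, empty_mem_powerset A, by simpa using hc0⟩

lemma shiftZ_eq_zero {c : ℕ → ℝ} {A : Finset V} {r : ℕ} (u : V → ℝ)
    (hc : ∀ k, r ≤ k → k ≤ A.card + r → c k = 0) : shiftZ c A r u = 0 :=
  sum_eq_zero fun S hS => by
    rw [hc _ (Nat.le_add_left r _) (by grw [card_le_card (mem_powerset.mp hS)]), zero_mul]

lemma mul_le_mul_of_logConcave {c : ℕ → ℝ} {m : ℕ} (hnn : ∀ k ≤ m, 0 ≤ c k)
    (hlc : ∀ k, 0 < k → k < m → c (k - 1) * c (k + 1) ≤ c k ^ 2)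
    (hint : ∀ j k, j ≤ k → k ≤ m → 0 < c k → 0 < c j) {r s : ℕ} (hrs : r ≤ s)
    (hsm : s + 2 ≤ m) : c r * c (s + 2) ≤ c (r + 1) * c (s + 1) := by
  induction s, hrs using Nat.le_induction with
  | base => simpa [sq] using hlc (r + 1) r.succ_pos (by omega)
  | succ s hrs ih =>
    obtain hzero | hpos := (hnn (s + 3) hsm).eq_or_lt
    · rw [← hzero, mul_zero]
      exact mul_nonneg (hnn _ (by omega)) (hnn _ (by omega))
    have hs2 : 0 < c (s + 2) := hint _ _ (by omega) hsm hpos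
    have hlc2 : c (s + 1) * c (s + 3) ≤ c (s + 2) ^ 2 := hlc (s + 2) (by omega) (by omega)
    refine le_of_mul_le_mul_right ?_ hs2
    calc c r * c (s + 1 + 2) * c (s + 2) = c r * c (s + 2) * c (s + 3) := by ring
      _ ≤ c (r + 1) * c (s + 1) * c (s + 3) := mul_le_mul_of_nonneg_right (ih (by omega)) hpos.le
      _ ≤ c (r + 1) * c (s + 2) ^ 2 := by
        rw [mul_assoc]; gcongr; exact hnn _ (by omega)
      _ = c (r + 1) * c (s + 1 + 1) * c (s + 2) := by ring

lemma shiftZ_mul_le_mul_of_logConcave [DecidableEq V] {c : ℕ → ℝ} {m : ℕ} (hnn : ∀ k ≤ m, 0 ≤ c k)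
    (hlc : ∀ k, 0 < k → k < m → c (k - 1) * c (k + 1) ≤ c k ^ 2)
    (hint : ∀ j k, j ≤ k → k ≤ m → 0 < c k → 0 < c j) {u : V → ℝ} (A : Finset V)
    (hu : ∀ k ∈ A, 0 < u k) {r s : ℕ} (hrs : r ≤ s) (hsm : s + 2 + A.card ≤ m) :
    shiftZ c A r u * shiftZ c A (s + 2) u ≤ shiftZ c A (r + 1) u * shiftZ c A (s + 1) u := by
  induction A using Finset.induction_on generalizing r s with
  | empty => simpa using mul_le_mul_of_logConcave hnn hlc hint hrs (by simpa using hsm)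
  | @insert v A hv ih =>
    have huA : ∀ k ∈ A, 0 < u k := fun k hk => hu k (mem_insert_of_mem hk)
    have hv0 : 0 ≤ u v := (hu v (mem_insert_self v A)).le
    rw [card_insert_of_notMem hv] at hsm
    have h0 := ih huA hrs (by omega)
    have h1 : shiftZ c A r u * shiftZ c A (s + 3) u ≤
        shiftZ c A (r + 2) u * shiftZ c A (s + 1) u := by
      have h := ih huA (r := r) (s := s + 1) (by omega) (by omega)
      obtain rfl | hlt := hrs.eq_or_lt
      · linarith
      · linarith [ih huA (r := r + 1) hlt (by omega)]
    have h2 := ih huA (r := r + 1) (s := s + 1) (by omega) (by omega)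
    simp only [shiftZ_insert c hv]
    linear_combination h0 + u v * h1 + u v ^ 2 * h2

/-- `sizeCov c A r s u / (Z_r Z_s)` is the mean of `|S| + s` under the weights `c (|S| + s) u^S`
minus the mean of `|S| + r` under the weights `c (|S| + r) u^S`. -/
noncomputable def sizeCov (c : ℕ → ℝ) (A : Finset V) (r s : ℕ) (u : V → ℝ) : ℝ :=
  shiftZ c A r u * shiftZ (fun k => k * c k) A s u -
    shiftZ (fun k => k * c k) A r u * shiftZ c A s u

lemma sizeCov_insert [DecidableEq V] (c : ℕ → ℝ) {A : Finset V} {v : V} (hv : v ∉ A)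
    (r s : ℕ) (u : V → ℝ) :
    sizeCov c (insert v A) r s u = sizeCov c A r s u +
      u v * (sizeCov c A r (s + 1) u + sizeCov c A (r + 1) s u) +
      u v ^ 2 * sizeCov c A (r + 1) (s + 1) u := by
  simp only [sizeCov, shiftZ_insert _ hv]
  ring

lemma sizeCov_ge [DecidableEq V] {c : ℕ → ℝ} {m : ℕ} (hnn : ∀ k ≤ m, 0 ≤ c k) {u : V → ℝ}
    (A : Finset V) (hu : ∀ k ∈ A, 0 < u k) {r s : ℕ} (hrs : r ≤ s) (hsm : s + A.card ≤ m) :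
    ((s : ℝ) - r) * c r * c s ≤ sizeCov c A r s u := by
  induction A using Finset.induction_on generalizing r s with
  | empty => exact le_of_eq (by simp [sizeCov]; ring)
  | @insert v A hv ih =>
    have huA : ∀ k ∈ A, 0 < u k := fun k hk => hu k (mem_insert_of_mem hk)
    rw [card_insert_of_notMem hv] at hsm
    have hcov_nonneg {r' s' : ℕ} (hrs' : r' ≤ s') (hsm' : s' + A.card ≤ m) :
        0 ≤ sizeCov c A r' s' u := by
      refine le_trans ?_ (ih huA hrs' hsm')
      have : (r' : ℝ) ≤ s' := by exact_mod_cast hrs'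
      exact mul_nonneg (mul_nonneg (by linarith) (hnn _ (by omega))) (hnn _ (by omega))
    have hmid : 0 ≤ sizeCov c A r (s + 1) u + sizeCov c A (r + 1) s u := by
      obtain rfl | hlt := hrs.eq_or_lt
      · exact le_of_eq (by simp only [sizeCov]; ring)
      · exact add_nonneg (hcov_nonneg (by omega) (by omega)) (hcov_nonneg hlt (by omega))
    have hlast := hcov_nonneg (r' := r + 1) (s' := s + 1) (by omega) (by omega)
    have hv0 : 0 ≤ u v := (hu v (mem_insert_self v A)).le
    rw [sizeCov_insert c hv]
    linear_combination ih huA hrs (by omega) + u v * hmid + u v ^ 2 * hlast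

lemma sum_powerset_filter_mem [DecidableEq V] {A : Finset V} {e : V} (he : e ∈ A)
    (F : Finset V → ℝ) :
    ∑ S ∈ A.powerset with e ∈ S, F S = ∑ S ∈ (A.erase e).powerset, F (insert e S) := by
  conv_lhs => rw [sum_filter, ← insert_erase he, sum_powerset_insert (notMem_erase e A)]
  rw [sum_eq_zero fun S hS => if_neg fun heS => notMem_erase e A (mem_powerset.mp hS heS),
    zero_add]
  exact sum_congr rfl fun S _ => if_pos (mem_insert_self e S)

lemma sum_powerset_filter_mem_and_mem [DecidableEq V] {A : Finset V} {e f : V} (he : e ∈ A)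
    (hf : f ∈ A) (hef : e ≠ f) (F : Finset V → ℝ) :
    ∑ S ∈ A.powerset with e ∈ S ∧ f ∈ S, F S =
      ∑ S ∈ ((A.erase e).erase f).powerset, F (insert e (insert f S)) := by
  have hfe : f ∈ A.erase e := mem_erase.mpr ⟨hef.symm, hf⟩
  rw [← filter_filter, sum_filter, sum_powerset_filter_mem he,
    ← sum_powerset_filter_mem hfe (fun S => F (insert e S)), sum_filter]
  exact sum_congr rfl fun S _ => by simp only [mem_insert, hef.symm, false_or]

lemma sum_powerset_filter_mem_card [DecidableEq V] (g : ℕ → ℝ) {A : Finset V} {e : V}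
    (he : e ∈ A) (u : V → ℝ) :
    ∑ S ∈ A.powerset with e ∈ S, g S.card * ∏ k ∈ S, u k = u e * shiftZ g (A.erase e) 1 u := by
  rw [sum_powerset_filter_mem he, shiftZ, mul_sum]
  refine sum_congr rfl fun S hS => ?_
  have heS : e ∉ S := fun h => notMem_erase e A (mem_powerset.mp hS h)
  rw [card_insert_of_notMem heS, prod_insert heS]
  ring

lemma sum_powerset_filter_mem_and_mem_card [DecidableEq V] (g : ℕ → ℝ) {A : Finset V} {e f : V}
    (he : e ∈ A) (hf : f ∈ A) (hef : e ≠ f) (u : V → ℝ) :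
    ∑ S ∈ A.powerset with e ∈ S ∧ f ∈ S, g S.card * ∏ k ∈ S, u k =
      u e * u f * shiftZ g ((A.erase e).erase f) 2 u := by
  rw [sum_powerset_filter_mem_and_mem he hf hef, shiftZ, mul_sum]
  refine sum_congr rfl fun S hS => ?_
  have hS := mem_powerset.mp hS
  have hfS : f ∉ S := fun h => notMem_erase f _ (hS h)
  have heS : e ∉ insert f S := by
    rw [mem_insert, not_or]
    exact ⟨hef, fun h => notMem_erase e A (erase_subset f _ (hS h))⟩
  rw [card_insert_of_notMem heS, card_insert_of_notMem hfS, prod_insert heS, prod_insert hfS]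
  ring

section Bridge

variable {c : ℕ → ℝ} {μ : Finset V → ℝ} {A : Finset V} {w : V → ℝ}

lemma lZ_eq (hμ : ∀ F, μ F = c F.card) : lZ A μ w = shiftZ c A 0 w :=
  sum_congr rfl fun S _ => by rw [hμ]; rfl

lemma lEnergy_eq (hμ : ∀ F, μ F = c F.card) :
    lEnergy A μ w = shiftZ (fun k => k * c k) A 0 w / shiftZ c A 0 w := by
  rw [lEnergy, lZ_eq hμ]
  exact congrArg (· / _) (sum_congr rfl fun S _ => by rw [hμ]; rfl)

lemma lProb_mem [DecidableEq V] (hμ : ∀ F, μ F = c F.card) {e : V} (he : e ∈ A) :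
    lProb A μ w (fun S => e ∈ S) = w e * shiftZ c (A.erase e) 1 w / shiftZ c A 0 w := by
  -- `lProb` filters with the classical instance; `filter_congr_decidable` restores `decidableMem`
  rw [lProb, filter_congr_decidable, lZ_eq hμ, ← sum_powerset_filter_mem_card c he]
  simp only [hμ]

lemma lProb_mem_and_mem [DecidableEq V] (hμ : ∀ F, μ F = c F.card) {e f : V} (he : e ∈ A)
    (hf : f ∈ A) (hef : e ≠ f) :
    lProb A μ w (fun S => e ∈ S ∧ f ∈ S) =
      w e * w f * shiftZ c ((A.erase e).erase f) 2 w / shiftZ c A 0 w := by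
  rw [lProb, filter_congr_decidable, lZ_eq hμ,
    ← sum_powerset_filter_mem_and_mem_card c he hf hef]
  simp only [hμ]

lemma lEnergyIn_eq [DecidableEq V] (hμ : ∀ F, μ F = c F.card) {e : V} (he : e ∈ A) :
    lEnergyIn A μ e w =
      w e * shiftZ (fun k => k * c k) (A.erase e) 1 w / shiftZ c A 0 w := by
  rw [lEnergyIn, lZ_eq hμ, ← sum_powerset_filter_mem_card _ he]
  simp only [hμ]

end Bridge

section Cavity

variable [DecidableEq V] {c : ℕ → ℝ} {μ : Finset V → ℝ} {A : Finset V}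

lemma lProb_and_le_mul_iff (hμ : ∀ F, μ F = c F.card) (hc : ∀ k ≤ A.card, 0 ≤ c k)
    (hc0 : 0 < c 0) {w : V → ℝ} (hw : ∀ k ∈ A, 0 < w k) {e f : V} (he : e ∈ A) (hf : f ∈ A)
    (hef : e ≠ f) :
    lProb A μ w (fun S => e ∈ S ∧ f ∈ S) ≤
        lProb A μ w (fun S => e ∈ S) * lProb A μ w (fun S => f ∈ S) ↔
      shiftZ c ((A.erase e).erase f) 0 w * shiftZ c ((A.erase e).erase f) 2 w ≤
        shiftZ c ((A.erase e).erase f) 1 w ^ 2 := by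
  have hZ : 0 < shiftZ c A 0 w := shiftZ_zero_pos hc hc0 hw
  have hwe := hw e he
  have hwf := hw f hf
  have hfe : f ∈ A.erase e := mem_erase.mpr ⟨hef.symm, hf⟩
  have hef' : e ∈ A.erase f := mem_erase.mpr ⟨hef, he⟩
  have hdefect : shiftZ c (A.erase e) 1 w * shiftZ c (A.erase f) 1 w -
        shiftZ c ((A.erase e).erase f) 2 w * shiftZ c A 0 w =
      shiftZ c ((A.erase e).erase f) 1 w ^ 2 -
        shiftZ c ((A.erase e).erase f) 0 w * shiftZ c ((A.erase e).erase f) 2 w := by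
    rw [shiftZ_erase c he 0, shiftZ_erase c hfe 0, shiftZ_erase c hfe 1,
      shiftZ_erase c hef' 1, erase_right_comm]
    ring
  have hcov : lProb A μ w (fun S => e ∈ S) * lProb A μ w (fun S => f ∈ S) -
        lProb A μ w (fun S => e ∈ S ∧ f ∈ S) =
      w e * w f / shiftZ c A 0 w ^ 2 * (shiftZ c ((A.erase e).erase f) 1 w ^ 2 -
        shiftZ c ((A.erase e).erase f) 0 w * shiftZ c ((A.erase e).erase f) 2 w) := by
    rw [lProb_mem_and_mem hμ he hf hef, lProb_mem hμ he, lProb_mem hμ hf, ← hdefect]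
    field_simp
  rw [← sub_nonneg, hcov, mul_nonneg_iff_of_pos_left (by positivity), sub_nonneg]

lemma lEnergy_mul_lProb_lt_iff (hμ : ∀ F, μ F = c F.card) (hc : ∀ k ≤ A.card, 0 ≤ c k)
    (hc0 : 0 < c 0) {w : V → ℝ} (hw : ∀ k ∈ A, 0 < w k) {e : V} (he : e ∈ A) :
    lEnergy A μ w * lProb A μ w (fun S => e ∈ S) < lEnergyIn A μ e w ↔
      0 < sizeCov c (A.erase e) 0 1 w := by
  have hZ : 0 < shiftZ c A 0 w := shiftZ_zero_pos hc hc0 hw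
  have hwe := hw e he
  have hcov : lEnergyIn A μ e w - lEnergy A μ w * lProb A μ w (fun S => e ∈ S) =
      w e / shiftZ c A 0 w ^ 2 * sizeCov c (A.erase e) 0 1 w := by
    rw [lEnergyIn_eq hμ he, lEnergy_eq hμ, lProb_mem hμ he, sizeCov, shiftZ_erase c he 0,
      shiftZ_erase _ he 0]
    field_simp
    ring
  rw [← sub_pos, hcov, mul_pos_iff_of_pos_left (by positivity)]

end Cavity

lemma single_le_shiftZ {c : ℕ → ℝ} {C S : Finset V} {r : ℕ} {u : V → ℝ}
    (hc : ∀ k ≤ C.card + r, 0 ≤ c k) (hu : ∀ v, 0 < u v) (hS : S ⊆ C) :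
    c (S.card + r) * ∏ v ∈ S, u v ≤ shiftZ c C r u :=
  single_le_sum (f := fun S => c (S.card + r) * ∏ v ∈ S, u v)
    (fun T hT => mul_nonneg (hc _ (by grw [card_le_card (mem_powerset.mp hT)]))
      (prod_nonneg fun v _ => (hu v).le)) (mem_powerset.mpr hS)

lemma exists_one_le_sq_add_lt {b D : ℝ} (M : ℝ) (h : b ^ 2 < D) :
    ∃ τ : ℝ, 1 ≤ τ ∧ (b * τ + M) ^ 2 < D * τ ^ 2 := by
  have hlim : Tendsto (fun τ : ℝ => (b + M / τ) ^ 2) atTop (nhds (b ^ 2)) := by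
    simpa using
      ((tendsto_const_nhds (x := b)).add ((tendsto_const_nhds (x := M)).div_atTop tendsto_id)).pow 2
  obtain ⟨τ, hτD, hτ⟩ := ((hlim.eventually (gt_mem_nhds h)).and (eventually_ge_atTop 1)).exists
  refine ⟨τ, hτ, ?_⟩
  calc (b * τ + M) ^ 2 = (b + M / τ) ^ 2 * τ ^ 2 := by field_simp
    _ < D * τ ^ 2 := by gcongr

lemma sq_lt_mul_of_bounds {z₀ z₁ z₂ d₀ d₂ b s : ℝ} (hs : 0 < s) (hz₁ : 0 ≤ z₁)
    (hd₀ : 0 ≤ d₀) (hd₂ : 0 ≤ d₂) (h₀ : d₀ ≤ z₀) (h₂ : d₂ ≤ z₂) (h₁ : z₁ * s ≤ b)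
    (h : b ^ 2 < d₀ * d₂ * s ^ 2) : z₁ ^ 2 < z₀ * z₂ := by
  refine lt_of_mul_lt_mul_right ?_ (sq_nonneg s)
  calc z₁ ^ 2 * s ^ 2 = (z₁ * s) ^ 2 := by ring
    _ ≤ b ^ 2 := by gcongr
    _ < d₀ * d₂ * s ^ 2 := h
    _ ≤ z₀ * z₂ * s ^ 2 := by gcongr; exact hd₀.trans h₀

lemma sq_le_inv_pow_pred_mul_pow_sq {τ : ℝ} (hτ : 1 ≤ τ) {a : ℕ} (ha : 1 ≤ a) :
    τ ^ 2 ≤ τ⁻¹ ^ (a - 1) * (τ ^ a) ^ 2 :=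
  calc τ ^ 2 ≤ τ ^ (a + 1) := pow_le_pow_right₀ hτ (by omega)
    _ = τ⁻¹ ^ (a - 1) * (τ ^ a) ^ 2 := by
      rw [← pow_mul, show a * 2 = a - 1 + (a + 1) by omega, pow_add τ (a - 1), ← mul_assoc,
        inv_pow, inv_mul_cancel₀ (by positivity), one_mul]

section TwoLevel

variable [DecidableEq V]

lemma prod_ite_mem_eq (P S : Finset V) (x y : ℝ) :
    ∏ v ∈ S, (if v ∈ P then x else y) = x ^ (S ∩ P).card * y ^ (S \ P).card := by
  rw [prod_ite, prod_const, prod_const, filter_mem_eq_inter, filter_notMem_eq_sdiff]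

lemma card_inter_lt_or_le_card_sdiff {S P : Finset V} {p a : ℕ} (hP : P.card = p)
    (hS : S.card < p ∨ p + a ≤ S.card) : (S ∩ P).card < p ∨ a ≤ (S \ P).card := by
  have := card_sdiff_add_card_inter S P
  have := card_le_card (inter_subset_left (s₁ := S) (s₂ := P))
  have := card_le_card (inter_subset_right (s₁ := S) (s₂ := P))
  omega

lemma prod_ite_mem_mul_le {P S : Finset V} {p a : ℕ} (hP : P.card = p) {x y : ℝ} (hx : 1 ≤ x)
    (hy₀ : 0 ≤ y) (hy₁ : y ≤ 1) (hxy : x * y ^ a ≤ 1)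
    (hS : (S ∩ P).card < p ∨ a ≤ (S \ P).card) :
    (∏ v ∈ S, if v ∈ P then x else y) * x ≤ x ^ p := by
  have hα : (S ∩ P).card ≤ p := hP ▸ card_le_card inter_subset_right
  rw [prod_ite_mem_eq]
  rcases hS with hα' | hβ
  · calc x ^ (S ∩ P).card * y ^ (S \ P).card * x ≤ x ^ (S ∩ P).card * 1 * x := by
          gcongr; exact pow_le_one₀ hy₀ hy₁
      _ = x ^ ((S ∩ P).card + 1) := by ring
      _ ≤ x ^ p := pow_le_pow_right₀ hx hα'
  · calc x ^ (S ∩ P).card * y ^ (S \ P).card * x ≤ x ^ (S ∩ P).card * (x * y ^ a) := by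
          rw [mul_assoc, mul_comm _ x]
          gcongr x ^ _ * (x * ?_)
          exact pow_le_pow_of_le_one hy₀ hy₁ hβ
      _ ≤ x ^ (S ∩ P).card := mul_le_of_le_one_right (by positivity) hxy
      _ ≤ x ^ p := pow_le_pow_right₀ hx hα

lemma shiftZ_one_ite_mul_le {c : ℕ → ℝ} {C P : Finset V} {p a : ℕ} {x y : ℝ}
    (hc : ∀ k ≤ C.card + 1, 0 ≤ c k) (hPC : P ⊆ C) (hP : P.card = p) (hx : 1 ≤ x)
    (hy₀ : 0 ≤ y) (hy₁ : y ≤ 1) (hxy : x * y ^ a ≤ 1)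
    (hgood : ∀ S ⊆ C, S ≠ P → c (S.card + 1) ≠ 0 → (S ∩ P).card < p ∨ a ≤ (S \ P).card) :
    shiftZ c C 1 (fun v => if v ∈ P then x else y) * x ≤
      (c (p + 1) * x + ∑ S ∈ C.powerset, c (S.card + 1)) * x ^ p := by
  have hcS : ∀ S ∈ C.powerset, 0 ≤ c (S.card + 1) := fun S hS =>
    hc _ (by grw [card_le_card (mem_powerset.mp hS)])
  have hrest : ∑ S ∈ C.powerset.erase P,
      c (S.card + 1) * (∏ v ∈ S, if v ∈ P then x else y) * x ≤
        (∑ S ∈ C.powerset, c (S.card + 1)) * x ^ p := by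
    rw [sum_mul]
    refine (sum_le_sum fun S hS => ?_).trans (sum_le_sum_of_subset_of_nonneg (erase_subset P _)
      fun S hS _ => mul_nonneg (hcS S hS) (by positivity))
    obtain ⟨hSP, hS⟩ := mem_erase.mp hS
    obtain hzero | hpos := (hcS S hS).eq_or_lt
    · rw [← hzero]; simp
    rw [mul_assoc]
    exact mul_le_mul_of_nonneg_left (prod_ite_mem_mul_le hP hx hy₀ hy₁ hxy
      (hgood S (mem_powerset.mp hS) hSP hpos.ne')) (hcS S hS)
  rw [shiftZ, sum_mul, ← add_sum_erase _ _ (mem_powerset.mpr hPC), prod_ite_mem_eq, inter_self,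
    sdiff_self, bot_eq_empty, card_empty, pow_zero, mul_one, hP]
  linarith

end TwoLevel

section Violation

variable [DecidableEq V] {c : ℕ → ℝ} {C : Finset V}

lemma exists_shiftZ_sq_lt_of_not_logConcave (hc : ∀ k ≤ C.card + 2, 0 ≤ c k) {p : ℕ}
    (hp : p ≤ C.card) (hviol : c (p + 1) ^ 2 < c p * c (p + 2)) :
    ∃ u : V → ℝ, (∀ v, 0 < u v) ∧ shiftZ c C 1 u ^ 2 < shiftZ c C 0 u * shiftZ c C 2 u := by
  obtain ⟨P, hPC, hP⟩ := exists_subset_card_eq hp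
  set M := ∑ S ∈ C.powerset, c (S.card + 1)
  obtain ⟨τ, hτ, hτM⟩ := exists_one_le_sq_add_lt M hviol
  have hτ0 : 0 < τ := by linarith
  set u : V → ℝ := fun v => if v ∈ P then τ else τ⁻¹
  have hu : ∀ v, 0 < u v := fun v => by dsimp only [u]; split_ifs <;> positivity
  have hprodP : ∏ v ∈ P, u v = τ ^ p := by simp [u, prod_ite_mem_eq, hP]
  have hZ₁ := shiftZ_one_ite_mul_le (a := 1) (fun k hk => hc k (by omega)) hPC hP hτ
    (by positivity) (inv_le_one_of_one_le₀ hτ) (by rw [pow_one, mul_inv_cancel₀ hτ0.ne'])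
    fun S _ hSP _ => by
      by_contra! h
      refine hSP (eq_of_subset_of_card_le (sdiff_eq_empty_iff_subset.mp ?_) ?_)
      · exact card_eq_zero.mp (by omega)
      · have := card_le_card (inter_subset_left (s₁ := S) (s₂ := P)); omega
  refine ⟨u, hu, sq_lt_mul_of_bounds (d₀ := c p * τ ^ p) (d₂ := c (p + 2) * τ ^ p) hτ0
    (shiftZ_nonneg hc (by omega) fun v _ => (hu v).le)
    (mul_nonneg (hc p (by omega)) (by positivity)) (mul_nonneg (hc (p + 2) (by omega))
    (by positivity)) ?_ ?_ hZ₁ ?_⟩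
  · simpa [hP, hprodP] using single_le_shiftZ (r := 0) (fun k hk => hc k (by omega)) hu hPC
  · simpa [hP, hprodP] using single_le_shiftZ (r := 2) hc hu hPC
  · calc ((c (p + 1) * τ + M) * τ ^ p) ^ 2 = (c (p + 1) * τ + M) ^ 2 * (τ ^ p) ^ 2 := by ring
      _ < c p * c (p + 2) * τ ^ 2 * (τ ^ p) ^ 2 := by gcongr
      _ = c p * τ ^ p * (c (p + 2) * τ ^ p) * τ ^ 2 := by ring

/-- The gap kills every term of `Z_1` with `p < |S| + 1 ≤ p + a`; the field `τ ^ a` on `P`,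
`τ⁻¹` elsewhere makes all other terms negligible against the `P`-term of `Z_0` and the
`P ∪ Q`-term of `Z_2`. -/
lemma exists_shiftZ_sq_lt_of_gap (hc : ∀ k ≤ C.card + 2, 0 ≤ c k) {p a : ℕ} (ha : 1 ≤ a)
    (hpa : p + a + 1 ≤ C.card + 2) (hp : 0 < c p) (hk : 0 < c (p + a + 1))
    (hgap : ∀ i, p < i → i ≤ p + a → c i = 0) :
    ∃ u : V → ℝ, (∀ v, 0 < u v) ∧ shiftZ c C 1 u ^ 2 < shiftZ c C 0 u * shiftZ c C 2 u := by
  obtain ⟨P, hPC, hP⟩ := exists_subset_card_eq (show p ≤ C.card by omega)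
  obtain ⟨Q, hQ, hQcard⟩ := exists_subset_card_eq
    (show a - 1 ≤ (C \ P).card by rw [card_sdiff_of_subset hPC]; omega)
  have hPQ : Disjoint P Q := disjoint_of_subset_right hQ disjoint_sdiff
  set M := ∑ S ∈ C.powerset, c (S.card + 1)
  obtain ⟨τ, hτ, hτM⟩ := exists_one_le_sq_add_lt (b := 0) M (by simpa using mul_pos hp hk)
  have hτ0 : 0 < τ := by linarith
  set u : V → ℝ := fun v => if v ∈ P then τ ^ a else τ⁻¹
  have hu : ∀ v, 0 < u v := fun v => by dsimp only [u]; split_ifs <;> positivity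
  have hprodP : ∏ v ∈ P, u v = (τ ^ a) ^ p := by simp [u, prod_ite_mem_eq, hP]
  have hprodPQ : ∏ v ∈ P ∪ Q, u v = (τ ^ a) ^ p * τ⁻¹ ^ (a - 1) := by
    rw [prod_ite_mem_eq, union_inter_cancel_left, union_sdiff_cancel_left hPQ, hP, hQcard]
  have hZ₁ := shiftZ_one_ite_mul_le (a := a) (fun k hk => hc k (by omega)) hPC hP
    (one_le_pow₀ hτ) (by positivity) (inv_le_one_of_one_le₀ hτ)
    (by rw [← mul_pow, mul_inv_cancel₀ hτ0.ne', one_pow])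
    fun S _ _ hcS => card_inter_lt_or_le_card_sdiff hP <| by
      by_contra! h
      exact hcS (hgap _ (by omega) (by omega))
  rw [hgap (p + 1) (by omega) (by omega), zero_mul, zero_add] at hZ₁
  refine ⟨u, hu, sq_lt_mul_of_bounds (d₀ := c p * (τ ^ a) ^ p)
    (d₂ := c (p + a + 1) * ((τ ^ a) ^ p * τ⁻¹ ^ (a - 1))) (pow_pos hτ0 a)
    (shiftZ_nonneg hc (by omega) fun v _ => (hu v).le) (by positivity) (by positivity)
    ?_ ?_ hZ₁ ?_⟩
  · simpa [hP, hprodP] using single_le_shiftZ (r := 0) (fun k hk => hc k (by omega)) hu hPC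
  · have h := single_le_shiftZ (r := 2) hc hu (union_subset hPC (hQ.trans sdiff_subset))
    rwa [hprodPQ, card_union_of_disjoint hPQ, hP, hQcard,
      show p + (a - 1) + 2 = p + a + 1 by omega] at h
  · calc (M * (τ ^ a) ^ p) ^ 2 = M ^ 2 * ((τ ^ a) ^ p) ^ 2 := by ring
      _ < c p * c (p + a + 1) * τ ^ 2 * ((τ ^ a) ^ p) ^ 2 := by gcongr; simpa using hτM
      _ ≤ c p * c (p + a + 1) * (τ⁻¹ ^ (a - 1) * (τ ^ a) ^ 2) * ((τ ^ a) ^ p) ^ 2 := by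
        gcongr; exact sq_le_inv_pow_pred_mul_pow_sq hτ ha
      _ = _ := by ring

end Violation

lemma pos_of_le_of_not_gap {c : ℕ → ℝ} {N : ℕ} (hnn : ∀ k ≤ N, 0 ≤ c k) (h0 : 0 < c 0)
    (hgap : ∀ p a, 1 ≤ a → p + a + 1 ≤ N → 0 < c p → 0 < c (p + a + 1) →
      ¬ ∀ i, p < i → i ≤ p + a → c i = 0) :
    ∀ j k, j ≤ k → k ≤ N → 0 < c k → 0 < c j := by
  intro j
  induction j with
  | zero => exact fun _ _ _ _ => h0
  | succ j ih =>
    intro k hjk hkN hk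
    have hj := ih k (by omega) hkN hk
    by_contra hj₁
    have hex : ∃ i, j < i ∧ 0 < c i := ⟨k, by omega, hk⟩
    obtain ⟨hji, hi⟩ := Nat.find_spec hex
    have hik : Nat.find hex ≤ k := Nat.find_min' hex ⟨by omega, hk⟩
    have hne : Nat.find hex ≠ j + 1 := fun h => hj₁ (h ▸ hi)
    refine hgap j (Nat.find hex - j - 1) (by omega) (by omega) hj
      (by rwa [show j + (Nat.find hex - j - 1) + 1 = Nat.find hex by omega]) fun l h₁ h₂ => ?_
    exact le_antisymm (not_lt.mp fun hl => Nat.find_min hex (by omega) ⟨h₁, hl⟩) (hnn l (by omega))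

section Consequences

variable [DecidableEq V] {c : ℕ → ℝ} {μ : Finset V → ℝ} {A : Finset V}

lemma lRayleigh_of_logConcave (hμ : ∀ F, μ F = c F.card) (hnn : ∀ k ≤ A.card, 0 ≤ c k)
    (hc0 : 0 < c 0) (hlc : ∀ k, 0 < k → k < A.card → c (k - 1) * c (k + 1) ≤ c k ^ 2)
    (hint : ∀ j k, j ≤ k → k ≤ A.card → 0 < c k → 0 < c j) : lRayleigh A μ := by
  intro w hw e he f hf hef
  have hcard := card_erase_of_mem (mem_erase.mpr ⟨hef.symm, hf⟩)
  rw [card_erase_of_mem he] at hcard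
  have h2 : 1 < A.card := one_lt_card.mpr ⟨e, he, f, hf, hef⟩
  rw [lProb_and_le_mul_iff hμ hnn hc0 hw he hf hef, sq]
  exact shiftZ_mul_le_mul_of_logConcave hnn hlc hint _
    (fun k hk => hw k (mem_of_mem_erase (mem_of_mem_erase hk))) le_rfl (by omega)

lemma lSizeInc_of_pos (hμ : ∀ F, μ F = c F.card) (hnn : ∀ k ≤ A.card, 0 ≤ c k)
    (hc0 : 0 < c 0) (hc1 : 0 < c 1) : lSizeInc A μ := by
  intro w hw e he
  rw [lEnergy_mul_lProb_lt_iff hμ hnn hc0 hw he]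
  have := sizeCov_ge hnn (A.erase e) (fun k hk => hw k (mem_of_mem_erase hk)) zero_le_one
    (by rw [card_erase_of_mem he]; have := card_pos.mpr ⟨e, he⟩; omega)
  exact (mul_pos hc0 hc1).trans_le (by simpa using this)

lemma exists_card_add_two_forall_shiftZ_of_lRayleigh (hμ : ∀ F, μ F = c F.card)
    (hnn : ∀ k ≤ A.card, 0 ≤ c k) (hc0 : 0 < c 0) (hray : lRayleigh A μ) (hA : 2 ≤ A.card) :
    ∃ C : Finset V, C.card + 2 = A.card ∧ ∀ u : V → ℝ, (∀ v, 0 < u v) →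
      shiftZ c C 0 u * shiftZ c C 2 u ≤ shiftZ c C 1 u ^ 2 := by
  obtain ⟨e, he, f, hf, hef⟩ := one_lt_card.mp hA
  have hcard := card_erase_of_mem (mem_erase.mpr ⟨hef.symm, hf⟩)
  rw [card_erase_of_mem he] at hcard
  exact ⟨(A.erase e).erase f, by omega, fun u hu =>
    (lProb_and_le_mul_iff hμ hnn hc0 (fun k _ => hu k) he hf hef).mp
      (hray u (fun k _ => hu k) e he f hf hef)⟩

lemma logConcave_of_lRayleigh (hμ : ∀ F, μ F = c F.card) (hnn : ∀ k ≤ A.card, 0 ≤ c k)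
    (hc0 : 0 < c 0) (hray : lRayleigh A μ) :
    ∀ k, 0 < k → k < A.card → c (k - 1) * c (k + 1) ≤ c k ^ 2 := by
  intro k hk hkA
  obtain ⟨C, hC, hCu⟩ :=
    exists_card_add_two_forall_shiftZ_of_lRayleigh hμ hnn hc0 hray (by omega)
  by_contra! hviol
  obtain ⟨u, hu, hlt⟩ := exists_shiftZ_sq_lt_of_not_logConcave (C := C) (p := k - 1)
    (fun i hi => hnn i (by omega)) (by omega)
    (by rwa [Nat.sub_add_cancel hk, show k - 1 + 2 = k + 1 by omega])
  exact (hCu u hu).not_gt hlt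

lemma support_interval_of_lRayleigh (hμ : ∀ F, μ F = c F.card) (hnn : ∀ k ≤ A.card, 0 ≤ c k)
    (hc0 : 0 < c 0) (hray : lRayleigh A μ) :
    ∀ j k, j ≤ k → k ≤ A.card → 0 < c k → 0 < c j :=
  pos_of_le_of_not_gap hnn hc0 fun p a ha hpa hp hk hgap => by
    obtain ⟨C, hC, hCu⟩ :=
      exists_card_add_two_forall_shiftZ_of_lRayleigh hμ hnn hc0 hray (by omega)
    obtain ⟨u, hu, hlt⟩ := exists_shiftZ_sq_lt_of_gap (C := C)
      (fun i hi => hnn i (by omega)) ha (by omega) hp hk hgap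
    exact (hCu u hu).not_gt hlt

lemma one_pos_of_lSizeInc (hμ : ∀ F, μ F = c F.card) (hnn : ∀ k ≤ A.card, 0 ≤ c k)
    (hc0 : 0 < c 0) (hint : ∀ j k, j ≤ k → k ≤ A.card → 0 < c k → 0 < c j)
    (hsize : lSizeInc A μ) (hA : A.Nonempty) : 0 < c 1 := by
  obtain ⟨e, he⟩ := hA
  have hcov := (lEnergy_mul_lProb_lt_iff hμ hnn hc0 (fun _ _ => one_pos) he).mp
    (hsize _ (fun _ _ => one_pos) e he)
  by_contra! hc1
  have hzero : ∀ k, 1 ≤ k → k ≤ (A.erase e).card + 1 → c k = 0 := fun k h₁ hk => by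
    rw [card_erase_of_mem he] at hk
    have := card_pos.mpr ⟨e, he⟩
    exact le_antisymm (not_lt.mp fun hck => hc1.not_gt (hint 1 k h₁ (by omega) hck))
      (hnn k (by omega))
  rw [sizeCov, shiftZ_eq_zero _ hzero, shiftZ_eq_zero (c := fun k => k * c k) _
    fun k h₁ hk => by simp [hzero k h₁ hk]] at hcov
  simp at hcov

end Consequences

end Exchangeable

open Exchangeable

theorem stmt5_general {E : Type*} [Fintype E] [DecidableEq E] (hm : 1 ≤ Fintype.card E)
    (c : ℕ → ℝ) (hnn : ∀ k ≤ Fintype.card E, 0 ≤ c k)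
    (μ : Finset E → ℝ) (hμ : ∀ F : Finset E, μ F = c F.card) :
    lCavityMonotone (Finset.univ : Finset E) μ ↔
      ((∀ k : ℕ, 0 < k → k < Fintype.card E → c (k - 1) * c (k + 1) ≤ c k ^ 2) ∧
        0 < c 0 ∧ 0 < c 1 ∧
        (∀ j k : ℕ, j ≤ k → k ≤ Fintype.card E → 0 < c k → 0 < c j)) := by
  rw [← card_univ] at hm hnn ⊢
  constructor
  · rintro ⟨-, hμ0, hray, hsize⟩
    have hc0 : 0 < c 0 := by simpa [hμ] using hμ0
    have hint := support_interval_of_lRayleigh hμ hnn hc0 hray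
    exact ⟨logConcave_of_lRayleigh hμ hnn hc0 hray, hc0,
      one_pos_of_lSizeInc hμ hnn hc0 hint hsize (card_pos.mp hm), hint⟩
  · rintro ⟨hlc, hc0, hc1, hint⟩
    exact ⟨fun S _ => hμ S ▸ hnn _ (card_le_univ S), by simpa [hμ] using hc0,
      lRayleigh_of_logConcave hμ hnn hc0 hlc hint, lSizeInc_of_pos hμ hnn hc0 hc1⟩

/-- an exchangeable measure `μ(F) = c(|F|)` is cavity-monotone iff `c` is
log-concave and its support is an integer interval containing `0` and `1`. -/
theorem stmt5 {E : Type*} [Fintype E] [DecidableEq E] (hm : 1 ≤ Fintype.card E)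
    (c : ℕ → ℝ) (hnn : ∀ k ≤ Fintype.card E, 0 ≤ c k) (hne : ∃ k ≤ Fintype.card E, c k ≠ 0)
    (μ : Finset E → ℝ) (hμ : ∀ F : Finset E, μ F = c F.card) :
    lCavityMonotone (Finset.univ : Finset E) μ ↔
      ((∀ k : ℕ, 0 < k → k < Fintype.card E → c (k - 1) * c (k + 1) ≤ c k ^ 2) ∧
        0 < c 0 ∧ 0 < c 1 ∧
        (∀ j k : ℕ, j ≤ k → k ≤ Fintype.card E → 0 < c k → 0 < c j)) :=
  stmt5_general hm c hnn μ hμ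
end

section
/- Let G = (V,E) be a finite acyclic network in which every local measure satisfies μ_i(∅) > 0. Then for every activity t > 0 the cavity equation x = tΓ_G(x) admits a unique solution x(t) with nonnegative coordinates, and for every initial configuration x⁰ ∈ [0,∞)^{Ē} the k-fold iterate (tΓ_G)^k(x⁰) equals x(t) for every k greater than or equal to the diameter of G (the maximal graph distance between two vertices in a common connected component). -/
open Finset Filter
open scoped Classical ENNReal

section NetworkDefs

variable {V : Type*} [DecidableEq V]

/-- The cavity operator: `(Γ_G x)_{i→j}` is the cavity ratio of the local measure `μ i`
at the edge `ij`, with external field `(x_{k→i} : k ∈ ∂i ∖ {j})`.  Local measures are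
encoded as functions of the set of neighbours selected. -/
noncomputable def cavOp (G : SimpleGraph V) [G.LocallyFinite]
    (μ : V → Finset V → ℝ) (x : V → V → ℝ) (i j : V) : ℝ :=
  (∑ S ∈ ((G.neighborFinset i).erase j).powerset, μ i (insert j S) * ∏ k ∈ S, x k i) /
  (∑ S ∈ ((G.neighborFinset i).erase j).powerset, μ i S * ∏ k ∈ S, x k i)

/-- One step of the cavity iteration at activity `t` : `x ↦ t Γ_G(x)`. -/
noncomputable def cavStep (G : SimpleGraph V) [G.LocallyFinite]
    (μ : V → Finset V → ℝ) (t : ℝ) (x : V → V → ℝ) : V → V → ℝ :=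
  fun i j => t * cavOp G μ x i j

/-- The neighbours `k` of `i` such that the edge `ik` belongs to the spanning subgraph `F`;
this encodes `F ∩ E_i` as a set of neighbours. -/
noncomputable def nbrsIn (G : SimpleGraph V) [G.LocallyFinite]
    (F : Finset (Sym2 V)) (i : V) : Finset V :=
  (G.neighborFinset i).filter (fun k => s(i, k) ∈ F)

variable [Fintype V]

/-- Global measure `μ(F) = ∏_i μ_i(F ∩ E_i)` of a spanning subgraph `F`. -/
noncomputable def gWeight (G : SimpleGraph V) [DecidableRel G.Adj]
    (μ : V → Finset V → ℝ) (F : Finset (Sym2 V)) : ℝ :=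
  ∏ i : V, μ i (nbrsIn G F i)

/-- Partition function `Z(G;t) = Σ_{F ⊆ E} μ(F) t^{|F|}`. -/
noncomputable def ZG (G : SimpleGraph V) [DecidableRel G.Adj]
    (μ : V → Finset V → ℝ) (t : ℝ) : ℝ :=
  ∑ F ∈ G.edgeFinset.powerset, gWeight G μ F * t ^ F.card

/-- Gibbs--Boltzmann probability of the event `p` at activity `t`. -/
noncomputable def gProb (G : SimpleGraph V) [DecidableRel G.Adj]
    (μ : V → Finset V → ℝ) (t : ℝ) (p : Finset (Sym2 V) → Prop) : ℝ :=
  (∑ F ∈ G.edgeFinset.powerset.filter p, gWeight G μ F * t ^ F.card) / ZG G μ t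

/-- Energy `U(G;t)`, the expected size of the random spanning subgraph. -/
noncomputable def UG (G : SimpleGraph V) [DecidableRel G.Adj]
    (μ : V → Finset V → ℝ) (t : ℝ) : ℝ :=
  (∑ F ∈ G.edgeFinset.powerset, (F.card : ℝ) * gWeight G μ F * t ^ F.card) / ZG G μ t

/-- `M(G)`, the maximum size of a spanning subgraph with positive weight. -/
noncomputable def MG (G : SimpleGraph V) [DecidableRel G.Adj]
    (μ : V → Finset V → ℝ) : ℕ :=
  (G.edgeFinset.powerset.filter (fun F => 0 < gWeight G μ F)).sup Finset.card

end NetworkDefs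

/-!
On a tree the message `x_{i→j}` is a function of the messages `x_{k→i}`, `k ∈ ∂i ∖ {j}`, only,
and these come from the branch of the tree hanging at `i` away from `j`. Unfolding this
recursion, after `d` iterations the message along an edge whose branch has depth at most `d`
no longer depends on the initial configuration. Every branch has depth at most the diameter,
so the iterates from any two starting points agree from then on; starting from `0` gives a
solution (nonnegative since the local measures are), and a solution is left unchanged by
the iteration, which gives uniqueness.
-/

namespace SimpleGraph

variable {V : Type*} {G : SimpleGraph V}

lemma Walk.dist_lt_of_mem_support {u v w : V} {p : G.Walk u v} (hp : p.length = G.dist u v)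
    (hw : w ∈ p.support) (hwv : w ≠ v) : G.dist u w < G.dist u v :=
  hp ▸ (dist_le (p.takeUntil w hw)).trans_lt (Walk.length_takeUntil_lt_length hw hwv)

/-- In a forest, every vertex `i` has at most one neighbour closer to a given vertex `u`. -/
lemma IsAcyclic.dist_lt_of_adj_of_dist_lt (hac : G.IsAcyclic) {u i j k : V}
    (hij : G.Adj i j) (hik : G.Adj i k) (hkj : k ≠ j) (hu : G.Reachable u k)
    (hk : G.dist u k < G.dist u i) : G.dist u i < G.dist u j := by
  by_contra! hj
  have hi : i ≠ k := fun h => (h ▸ hk).false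
  obtain ⟨p, hp, hpk⟩ := hu.exists_path_of_dist
  obtain ⟨q, hq, hqj⟩ := (hu.trans hik.symm.reachable |>.trans hij.reachable).exists_path_of_dist
  have hip : i ∉ p.support := fun h => (p.dist_lt_of_mem_support hpk h hi).not_ge hk.le
  have hiq : i ∉ q.support := fun h => (q.dist_lt_of_mem_support hqj h hij.ne).not_ge hj
  have hpq := Subtype.mk.inj <| (hac.subsingleton_path u i).elim
    ⟨_, hp.concat hip hik.symm⟩ ⟨_, hq.concat hiq hij.symm⟩
  exact hkj (Walk.concat_inj hpq).1

/-- The vertices `u` with `dist u i < dist u j` form the branch of the forest hanging at `i`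
away from `j`; `BranchWithin G i j d` says it lies within distance `d` of `j`. -/
def BranchWithin (G : SimpleGraph V) (i j : V) (d : ℕ) : Prop :=
  ∀ u, G.Reachable u i → G.dist u i < G.dist u j → G.dist u j ≤ d

lemma not_branchWithin_zero {i j : V} (hij : G.Adj i j) : ¬ G.BranchWithin i j 0 := by
  intro h
  have := h i .rfl (by simp [dist_eq_one_iff_adj.mpr hij])
  simp [dist_eq_one_iff_adj.mpr hij] at this

lemma IsAcyclic.branchWithin_of_succ (hac : G.IsAcyclic) {i j k : V} {d : ℕ}
    (hij : G.Adj i j) (hik : G.Adj i k) (hkj : k ≠ j) (h : G.BranchWithin i j (d + 1)) :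
    G.BranchWithin k i d := fun u hu hk =>
  Nat.le_of_lt_succ <| (hac.dist_lt_of_adj_of_dist_lt hij hik hkj hu hk).trans_le
    (h u (hu.trans hik.symm.reachable) (hac.dist_lt_of_adj_of_dist_lt hij hik hkj hu hk))

lemma branchWithin_of_forall_dist_le {d : ℕ} (h : ∀ u v, G.Reachable u v → G.dist u v ≤ d)
    {i j : V} (hij : G.Adj i j) : G.BranchWithin i j d :=
  fun u hu _ => h u j (hu.trans hij.reachable)

lemma dist_lt_card [Fintype V] {u v : V} (h : G.Reachable u v) : G.dist u v < Fintype.card V := by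
  obtain ⟨p, hp, hpl⟩ := h.exists_path_of_dist
  exact hpl ▸ hp.length_lt

end SimpleGraph

section Cavity

open SimpleGraph

variable {V : Type*} [DecidableEq V] {G : SimpleGraph V} [G.LocallyFinite]
  {μ : V → Finset V → ℝ} {t : ℝ}

def IsCavitySolution (G : SimpleGraph V) [G.LocallyFinite] (μ : V → Finset V → ℝ) (t : ℝ)
    (x : V → V → ℝ) : Prop :=
  ∀ i j, G.Adj i j → x i j = t * cavOp G μ x i j

lemma cavOp_congr {x y : V → V → ℝ} {i j : V} (h : ∀ k, G.Adj i k → k ≠ j → x k i = y k i) :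
    cavOp G μ x i j = cavOp G μ y i j := by
  have hsum : ∀ ν : Finset V → ℝ,
      ∑ S ∈ ((G.neighborFinset i).erase j).powerset, ν S * ∏ k ∈ S, x k i =
      ∑ S ∈ ((G.neighborFinset i).erase j).powerset, ν S * ∏ k ∈ S, y k i := by
    refine fun ν => sum_congr rfl fun S hS => congrArg _ (prod_congr rfl fun k hk => ?_)
    obtain ⟨hkj, hk⟩ := mem_erase.mp (mem_powerset.mp hS hk)
    exact h k ((mem_neighborFinset _ _ _).mp hk) hkj
  simp only [cavOp, hsum]

lemma cavOp_nonneg {x : V → V → ℝ} {i j : V}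
    (hμ : ∀ S ∈ (G.neighborFinset i).powerset, 0 ≤ μ i S) (hx : ∀ k, G.Adj i k → 0 ≤ x k i)
    (hij : G.Adj i j) : 0 ≤ cavOp G μ x i j := by
  have hsub : ∀ S ∈ ((G.neighborFinset i).erase j).powerset, S ⊆ G.neighborFinset i :=
    fun S hS => (mem_powerset.mp hS).trans (erase_subset _ _)
  have hprod : ∀ S ∈ ((G.neighborFinset i).erase j).powerset, 0 ≤ ∏ k ∈ S, x k i :=
    fun S hS => prod_nonneg fun k hk => hx k ((mem_neighborFinset _ _ _).mp (hsub S hS hk))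
  refine div_nonneg (sum_nonneg fun S hS => mul_nonneg (hμ _ ?_) (hprod S hS))
    (sum_nonneg fun S hS => mul_nonneg (hμ _ (mem_powerset.mpr (hsub S hS))) (hprod S hS))
  exact mem_powerset.mpr (insert_subset ((mem_neighborFinset _ _ _).mpr hij) (hsub S hS))

lemma cavStep_iterate_nonneg (hμ : ∀ i, ∀ S ∈ (G.neighborFinset i).powerset, 0 ≤ μ i S)
    (ht : 0 ≤ t) {x : V → V → ℝ} (hx : ∀ i j, G.Adj i j → 0 ≤ x i j) (m : ℕ) :
    ∀ i j, G.Adj i j → 0 ≤ (cavStep G μ t)^[m] x i j := by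
  induction m with
  | zero => exact hx
  | succ m ih =>
    intro i j hij
    rw [Function.iterate_succ_apply']
    exact mul_nonneg ht (cavOp_nonneg (hμ i) (fun k hik => ih k i hik.symm) hij)

lemma IsCavitySolution.cavStep_iterate_apply {x : V → V → ℝ} (hx : IsCavitySolution G μ t x)
    (m : ℕ) : ∀ i j, G.Adj i j → (cavStep G μ t)^[m] x i j = x i j := by
  induction m with
  | zero => exact fun _ _ _ => rfl
  | succ m ih =>
    intro i j hij
    rw [Function.iterate_succ_apply', hx i j hij]
    exact congrArg (t * ·) (cavOp_congr fun k hik _ => ih k i hik.symm)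

lemma SimpleGraph.IsAcyclic.cavStep_iterate_eq (hac : G.IsAcyclic) {d : ℕ} :
    ∀ {m m' : ℕ}, d ≤ m → d ≤ m' → ∀ (x y : V → V → ℝ) {i j : V}, G.Adj i j →
      G.BranchWithin i j d → (cavStep G μ t)^[m] x i j = (cavStep G μ t)^[m'] y i j := by
  induction d with
  | zero =>
    intro _ _ _ _ _ _ _ _ hij h
    exact absurd h (not_branchWithin_zero hij)
  | succ d ih =>
    rintro (_ | m) (_ | m') hm hm' x y i j hij h
    any_goals omega
    rw [Function.iterate_succ_apply', Function.iterate_succ_apply']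
    exact congrArg (t * ·) (cavOp_congr fun k hik hkj =>
      ih (by omega) (by omega) x y hik.symm (hac.branchWithin_of_succ hij hik hkj h))

end Cavity

theorem stmt6_general {V : Type*} [Fintype V] [DecidableEq V] (G : SimpleGraph V)
    [DecidableRel G.Adj] (hac : G.IsAcyclic) (μ : V → Finset V → ℝ)
    (hnn : ∀ i : V, ∀ S ∈ (G.neighborFinset i).powerset, 0 ≤ μ i S)
    (t : ℝ) (ht : 0 < t) :
    ∃ x : V → V → ℝ,
      (∀ i j, 0 ≤ x i j) ∧
      (∀ i j, G.Adj i j → x i j = t * cavOp G μ x i j) ∧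
      (∀ y : V → V → ℝ, (∀ i j, 0 ≤ y i j) →
        (∀ i j, G.Adj i j → y i j = t * cavOp G μ y i j) →
        ∀ i j, G.Adj i j → y i j = x i j) ∧
      (∀ x0 : V → V → ℝ, (∀ i j, 0 ≤ x0 i j) →
        ∀ k : ℕ, (∀ u v : V, G.Reachable u v → G.dist u v ≤ k) →
        ∀ i j, G.Adj i j → (cavStep G μ t)^[k] x0 i j = x i j) := by
  set N := Fintype.card V
  have hN : ∀ i j, G.Adj i j → G.BranchWithin i j N :=
    fun _ _ => SimpleGraph.branchWithin_of_forall_dist_le fun _ _ h =>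
      (SimpleGraph.dist_lt_card h).le
  -- off the edges the iterates may be negative: `μ i` is only constrained on subsets of `∂i`
  obtain ⟨x, hx, hx_off⟩ : ∃ x : V → V → ℝ,
      (∀ i j, G.Adj i j → x i j = (cavStep G μ t)^[N] 0 i j) ∧ ∀ i j, ¬ G.Adj i j → x i j = 0 :=
    ⟨fun i j => if G.Adj i j then (cavStep G μ t)^[N] 0 i j else 0,
      fun _ _ h => if_pos h, fun _ _ h => if_neg h⟩
  have hsol : IsCavitySolution G μ t x := fun i j hij => by
    rw [hx i j hij, hac.cavStep_iterate_eq le_rfl N.le_succ 0 0 hij (hN i j hij),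
      Function.iterate_succ_apply']
    exact congrArg (t * ·) (cavOp_congr fun k hik _ => (hx k i hik.symm).symm)
  refine ⟨x, fun i j => ?_, hsol, fun y _ hy i j hij => ?_, fun x0 _ k hk i j hij => ?_⟩
  · by_cases hij : G.Adj i j
    · exact (hx i j hij).symm ▸ cavStep_iterate_nonneg hnn ht.le (fun _ _ _ => le_rfl) N i j hij
    · exact (hx_off i j hij).ge
  · rw [← IsCavitySolution.cavStep_iterate_apply hy N i j hij, hx i j hij]
    exact hac.cavStep_iterate_eq le_rfl le_rfl y 0 hij (hN i j hij)
  · rw [← hsol.cavStep_iterate_apply k i j hij]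
    exact hac.cavStep_iterate_eq le_rfl le_rfl x0 x hij
      (SimpleGraph.branchWithin_of_forall_dist_le hk hij)

/-- on a finite acyclic network with `μ_i(∅) > 0`, the cavity equation at
any activity `t > 0` has a unique nonnegative solution, reached from any initial
configuration after a number of iterations equal to (any bound on) the diameter. -/
theorem stmt6 {V : Type*} [Fintype V] [DecidableEq V] (G : SimpleGraph V)
    [DecidableRel G.Adj] (hac : G.IsAcyclic) (μ : V → Finset V → ℝ)
    (hnn : ∀ i : V, ∀ S ∈ (G.neighborFinset i).powerset, 0 ≤ μ i S)
    (h0 : ∀ i : V, 0 < μ i ∅) (t : ℝ) (ht : 0 < t) :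
    ∃ x : V → V → ℝ,
      (∀ i j, 0 ≤ x i j) ∧
      (∀ i j, G.Adj i j → x i j = t * cavOp G μ x i j) ∧
      (∀ y : V → V → ℝ, (∀ i j, 0 ≤ y i j) →
        (∀ i j, G.Adj i j → y i j = t * cavOp G μ y i j) →
        ∀ i j, G.Adj i j → y i j = x i j) ∧
      (∀ x0 : V → V → ℝ, (∀ i j, 0 ≤ x0 i j) →
        ∀ k : ℕ, (∀ u v : V, G.Reachable u v → G.dist u v ≤ k) →
        ∀ i j, G.Adj i j → (cavStep G μ t)^[k] x0 i j = x i j) :=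
  stmt6_general G hac μ hnn t ht
end

section
/- Let G = (V,E) be a finite acyclic network in which every local measure satisfies μ_i(∅) > 0, let t > 0, and let x(t) be the unique solution of the cavity equation x = tΓ_G(x). Then for every vertex i ∈ V and every subset I ⊆ E_i, the marginal law of 𝓕 ∩ E_i under the Gibbs–Boltzmann law satisfies P^t_G(𝓕 ∩ E_i = I) = μ_i(I) ∏_{j : ij∈I} x_{j→i}(t) / (Σ_{J⊆E_i} μ_i(J) ∏_{j : ij∈J} x_{j→i}(t)); i.e. the marginal is obtained from μ_i by imposing the external field (x_{j→i}(t) : j ∈ ∂i). -/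
open Finset Filter
open scoped Classical ENNReal

/-!
Prune a leaf `ℓ ≠ i` of the forest, attached at `p`. The cavity equation at the leaf reads
`μ_ℓ(∅) x_{ℓ→p} = t μ_ℓ({p})`, so summing over the presence of the edge `ℓp` amounts to replacing
`μ_p` by `S ↦ μ_p(S) + x_{ℓ→p} μ_p(S ∪ {ℓ})` on the smaller forest. This preserves the cavity
equations of the remaining edges and, once the factor `μ_i` is removed, the weight of every fiber
`{F ∩ E_i = I}`, except that for `p = i` the fibers containing `ℓp` pick up the factor `x_{ℓ→i}`.
By induction on the number of edges these fiber weights are `c ∏_{j ∈ I} x_{j→i}` with `c > 0`,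
and normalizing gives the marginal.
-/

namespace SimpleGraph

variable {V : Type*} [Fintype V] {G : SimpleGraph V} [DecidableRel G.Adj]

lemma adj_of_neighborFinset_eq_singleton {ℓ p : V} (hleaf : G.neighborFinset ℓ = {p}) :
    G.Adj ℓ p :=
  (mem_neighborFinset _ _ _).1 (hleaf ▸ Finset.mem_singleton_self p)

variable [DecidableEq V]

lemma IsAcyclic.neighborFinset_eq_of_forall_length_le (hG : G.IsAcyclic) {u v : V}
    {q : G.Walk u v} (hq : q.IsPath) (hnil : ¬q.Nil)
    (hmax : ∀ (a b : V) (q' : G.Walk a b), q'.IsPath → q'.length ≤ q.length) :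
    G.neighborFinset u = {q.snd} := by
  ext w
  simp only [mem_neighborFinset, Finset.mem_singleton]
  refine ⟨fun hadj => hG.eq_snd_of_adj_start hq hadj ?_, fun h => h ▸ q.adj_snd hnil⟩
  by_contra hw
  have := hmax _ _ _ (hq.cons (h := hadj.symm) hw)
  simp at this

lemma IsAcyclic.exists_leaf_ne (hG : G.IsAcyclic) {a b : V} (hab : G.Adj a b) (i : V) :
    ∃ ℓ p, ℓ ≠ i ∧ G.neighborFinset ℓ = {p} := by
  have : Nonempty V := ⟨a⟩
  obtain ⟨u, v, q, hq, hmax⟩ := Walk.exists_isPath_forall_isPath_length_le_length G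
  have hnil : ¬q.Nil := fun h => by
    simpa [h.length_eq_zero] using hmax a b _ (Path.singleton hab).2
  have hnil' : ¬q.reverse.Nil := by simpa using hnil
  by_cases hu : u = i
  · exact ⟨v, _, fun hv => hnil (hq.nil_iff_eq.2 (hu.trans hv.symm)),
      hG.neighborFinset_eq_of_forall_length_le hq.reverse hnil' (by simpa using hmax)⟩
  · exact ⟨u, _, hu, hG.neighborFinset_eq_of_forall_length_le hq hnil hmax⟩

lemma neighborFinset_deleteEdges_left (a b : V) :
    (G.deleteEdges {s(a, b)}).neighborFinset a = (G.neighborFinset a).erase b := by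
  ext z
  simp only [mem_neighborFinset, deleteEdges_adj, Set.mem_singleton_iff, Sym2.congr_right,
    Finset.mem_erase]
  tauto

lemma neighborFinset_deleteEdges_right (a b : V) :
    (G.deleteEdges {s(a, b)}).neighborFinset b = (G.neighborFinset b).erase a := by
  rw [← neighborFinset_deleteEdges_left b a]
  ext z
  simp [Sym2.eq_swap]

lemma neighborFinset_deleteEdges_of_ne {a b k : V} (ha : k ≠ a) (hb : k ≠ b) :
    (G.deleteEdges {s(a, b)}).neighborFinset k = G.neighborFinset k := by
  ext z
  simp [ha, hb]

lemma edgeFinset_deleteEdges_singleton (e : Sym2 V) :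
    (G.deleteEdges {e}).edgeFinset = G.edgeFinset.erase e := by
  ext f
  simp [and_comm]

end SimpleGraph

section LocalMeasures

variable {V : Type*} [DecidableEq V]

lemma lZ_insert {A : Finset V} {ℓ : V} (hℓ : ℓ ∉ A) (ν : Finset V → ℝ) (w : V → ℝ) :
    lZ (insert ℓ A) ν w = lZ A (fun S => ν S + w ℓ * ν (insert ℓ S)) w := by
  rw [lZ, lZ, sum_powerset_insert hℓ, ← sum_add_distrib]
  refine sum_congr rfl fun S hS => ?_
  rw [prod_insert fun h => hℓ (mem_powerset.1 hS h)]
  ring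

lemma lGamma_insert {A : Finset V} {ℓ b : V} (hℓ : ℓ ∉ A) (hb : b ≠ ℓ) (ν : Finset V → ℝ)
    (w : V → ℝ) :
    lGamma (insert ℓ A) ν b w = lGamma A (fun S => ν S + w ℓ * ν (insert ℓ S)) b w := by
  have hℓ' : ℓ ∉ A.erase b := fun h => hℓ (mem_of_mem_erase h)
  have hnum := lZ_insert hℓ' (fun S => ν (insert b S)) w
  have hden := lZ_insert hℓ' ν w
  simp only [lZ, insert_comm b ℓ] at hnum hden
  rw [lGamma, lGamma, erase_insert_of_ne hb.symm, hnum, hden]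

end LocalMeasures

noncomputable def absorbLeaf {V : Type*} [DecidableEq V] (μ : V → Finset V → ℝ) (ℓ p : V)
    (y : ℝ) : V → Finset V → ℝ :=
  Function.update μ p fun S => μ p S + y * μ p (insert ℓ S)

section AbsorbLeaf

variable {V : Type*} [DecidableEq V]

@[simp]
lemma absorbLeaf_self (μ : V → Finset V → ℝ) (ℓ p : V) (y : ℝ) :
    absorbLeaf μ ℓ p y p = fun S => μ p S + y * μ p (insert ℓ S) :=
  Function.update_self ..

@[simp]
lemma absorbLeaf_of_ne (μ : V → Finset V → ℝ) {ℓ p k : V} (hk : k ≠ p) (y : ℝ) :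
    absorbLeaf μ ℓ p y k = μ k :=
  Function.update_of_ne hk ..

lemma absorbLeaf_update_of_ne (μ : V → Finset V → ℝ) {ℓ p i : V} (hip : i ≠ p)
    (f : Finset V → ℝ) (y : ℝ) :
    absorbLeaf (Function.update μ i f) ℓ p y = Function.update (absorbLeaf μ ℓ p y) i f := by
  simp only [absorbLeaf, Function.update_of_ne hip.symm]
  exact Function.update_comm hip ..

end AbsorbLeaf

noncomputable def fiberWeight {V : Type*} [Fintype V] [DecidableEq V] (G : SimpleGraph V)
    [DecidableRel G.Adj] (μ : V → Finset V → ℝ) (t : ℝ) (i : V) (I : Finset V) : ℝ :=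
  ∑ F ∈ G.edgeFinset.powerset with nbrsIn G F i = I,
    gWeight G (Function.update μ i fun _ => 1) F * t ^ #F

def FibersFactorize {V : Type*} [Fintype V] [DecidableEq V] (G : SimpleGraph V)
    [DecidableRel G.Adj] (μ : V → Finset V → ℝ) (t : ℝ) (x : V → V → ℝ) (i : V) : Prop :=
  0 < fiberWeight G μ t i ∅ ∧
    ∀ I ⊆ G.neighborFinset i, fiberWeight G μ t i I = fiberWeight G μ t i ∅ * ∏ j ∈ I, x j i

section Network

open SimpleGraph

variable {V : Type*} [Fintype V] [DecidableEq V] {G : SimpleGraph V} [DecidableRel G.Adj]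

lemma nbrsIn_subset_neighborFinset (F : Finset (Sym2 V)) (k : V) :
    nbrsIn G F k ⊆ G.neighborFinset k :=
  filter_subset _ _

lemma nbrsIn_eq_of_le {H : SimpleGraph V} [DecidableRel H.Adj] (hle : H ≤ G)
    {F : Finset (Sym2 V)} (hF : F ⊆ H.edgeFinset) (k : V) : nbrsIn G F k = nbrsIn H F k := by
  ext z
  simp only [nbrsIn, mem_filter, mem_neighborFinset]
  exact ⟨fun h => ⟨mem_edgeFinset.1 (hF h.2), h.2⟩, fun h => ⟨hle h.1, h.2⟩⟩

lemma nbrsIn_insert_of_ne {a b k : V} (ha : k ≠ a) (hb : k ≠ b) (F : Finset (Sym2 V)) :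
    nbrsIn G (insert s(a, b) F) k = nbrsIn G F k := by
  refine filter_congr fun z _ => ?_
  simp [ha, hb]

lemma nbrsIn_insert_left {a b : V} (hab : G.Adj a b) (F : Finset (Sym2 V)) :
    nbrsIn G (insert s(a, b) F) a = insert b (nbrsIn G F a) := by
  ext z
  simp only [nbrsIn, mem_filter, mem_insert, mem_neighborFinset, Sym2.congr_right]
  grind

lemma nbrsIn_insert_right {a b : V} (hab : G.Adj a b) (F : Finset (Sym2 V)) :
    nbrsIn G (insert s(a, b) F) b = insert a (nbrsIn G F b) := by
  rw [Sym2.eq_swap]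
  exact nbrsIn_insert_left hab.symm F

lemma gWeight_eq_of_le {H : SimpleGraph V} [DecidableRel H.Adj] (hle : H ≤ G)
    {F : Finset (Sym2 V)} (hF : F ⊆ H.edgeFinset) (ν : V → Finset V → ℝ) :
    gWeight G ν F = gWeight H ν F :=
  prod_congr rfl fun k _ => by rw [nbrsIn_eq_of_le hle hF]

lemma gWeight_eq_mul_mul {a b : V} (hab : a ≠ b) (ν : V → Finset V → ℝ)
    (F : Finset (Sym2 V)) :
    gWeight G ν F = ν a (nbrsIn G F a) * ν b (nbrsIn G F b) *
      ∏ k ∈ (univ.erase a).erase b, ν k (nbrsIn G F k) := by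
  rw [gWeight, ← mul_prod_erase univ _ (mem_univ a),
    ← mul_prod_erase _ _ (mem_erase.2 ⟨hab.symm, mem_univ b⟩), mul_assoc]

lemma gWeight_eq_mul_gWeight_update (μ : V → Finset V → ℝ) (i : V) (F : Finset (Sym2 V)) :
    gWeight G μ F = μ i (nbrsIn G F i) * gWeight G (Function.update μ i fun _ => 1) F := by
  rw [gWeight, gWeight, ← mul_prod_erase univ _ (mem_univ i),
    ← mul_prod_erase univ _ (mem_univ i), Function.update_self, one_mul]
  congr 1
  exact prod_congr rfl fun k hk => by rw [Function.update_of_ne (ne_of_mem_erase hk)]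

lemma cavOp_eq_lGamma (μ : V → Finset V → ℝ) (x : V → V → ℝ) (i j : V) :
    cavOp G μ x i j = lGamma (G.neighborFinset i) (μ i) j fun k => x k i :=
  rfl

lemma cavOp_of_neighborFinset_eq_singleton {ℓ p : V} (hleaf : G.neighborFinset ℓ = {p})
    (μ : V → Finset V → ℝ) (x : V → V → ℝ) : cavOp G μ x ℓ p = μ ℓ {p} / μ ℓ ∅ := by
  simp [cavOp, hleaf]

lemma sum_powerset_edgeFinset_eq_sum_deleteEdges {M : Type*} [AddCommMonoid M] {e : Sym2 V}
    (he : e ∈ G.edgeSet) (f : Finset (Sym2 V) → M) :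
    ∑ F ∈ G.edgeFinset.powerset, f F =
      ∑ F ∈ (G.deleteEdges {e}).edgeFinset.powerset, (f F + f (insert e F)) := by
  rw [edgeFinset_deleteEdges_singleton, sum_add_distrib,
    ← sum_powerset_insert (notMem_erase e _), insert_erase (mem_edgeFinset.2 he)]

end Network

section LeafPruning

open SimpleGraph

variable {V : Type*} [Fintype V] [DecidableEq V] {G : SimpleGraph V} [DecidableRel G.Adj]
  {ℓ p : V} {μ : V → Finset V → ℝ} {t y : ℝ}

lemma neighborFinset_deleteEdges_leaf (hleaf : G.neighborFinset ℓ = {p}) :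
    (G.deleteEdges {s(ℓ, p)}).neighborFinset ℓ = ∅ := by
  rw [neighborFinset_deleteEdges_left, hleaf, erase_singleton]

lemma nbrsIn_deleteEdges_leaf (hleaf : G.neighborFinset ℓ = {p}) (F : Finset (Sym2 V)) :
    nbrsIn (G.deleteEdges {s(ℓ, p)}) F ℓ = ∅ :=
  subset_empty.1 (neighborFinset_deleteEdges_leaf hleaf ▸ nbrsIn_subset_neighborFinset F ℓ)

lemma gWeight_deleteEdges_leaf (hleaf : G.neighborFinset ℓ = {p}) (ν : V → Finset V → ℝ)
    (F : Finset (Sym2 V)) :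
    gWeight (G.deleteEdges {s(ℓ, p)}) ν F = ν ℓ ∅ * ν p (nbrsIn (G.deleteEdges {s(ℓ, p)}) F p) *
      ∏ k ∈ (univ.erase ℓ).erase p, ν k (nbrsIn (G.deleteEdges {s(ℓ, p)}) F k) := by
  rw [gWeight_eq_mul_mul (adj_of_neighborFinset_eq_singleton hleaf).ne,
    nbrsIn_deleteEdges_leaf hleaf]

lemma gWeight_insert_leaf (hleaf : G.neighborFinset ℓ = {p}) (ν : V → Finset V → ℝ)
    {F : Finset (Sym2 V)} (hF : F ⊆ (G.deleteEdges {s(ℓ, p)}).edgeFinset) :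
    gWeight G ν (insert s(ℓ, p) F) =
      ν ℓ {p} * ν p (insert ℓ (nbrsIn (G.deleteEdges {s(ℓ, p)}) F p)) *
        ∏ k ∈ (univ.erase ℓ).erase p, ν k (nbrsIn (G.deleteEdges {s(ℓ, p)}) F k) := by
  have hadj := adj_of_neighborFinset_eq_singleton hleaf
  have hle : G.deleteEdges {s(ℓ, p)} ≤ G := deleteEdges_le _
  rw [gWeight_eq_mul_mul hadj.ne, nbrsIn_insert_left hadj, nbrsIn_insert_right hadj,
    nbrsIn_eq_of_le hle hF, nbrsIn_eq_of_le hle hF,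
    nbrsIn_deleteEdges_leaf hleaf]
  congr 1
  refine prod_congr rfl fun k hk => ?_
  obtain ⟨hkp, hkℓ⟩ : k ≠ p ∧ k ≠ ℓ :=
    ⟨ne_of_mem_erase hk, ne_of_mem_erase (mem_of_mem_erase hk)⟩
  rw [nbrsIn_insert_of_ne hkℓ hkp, nbrsIn_eq_of_le hle hF]

lemma notMem_of_subset_edgeFinset_deleteEdges {e : Sym2 V} {F : Finset (Sym2 V)}
    (hF : F ⊆ (G.deleteEdges {e}).edgeFinset) : e ∉ F := fun h => by
  simpa [edgeFinset_deleteEdges_singleton] using hF h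

lemma left_notMem_nbrsIn_deleteEdges (a b : V) (F : Finset (Sym2 V)) :
    a ∉ nbrsIn (G.deleteEdges {s(a, b)}) F b := fun h => by
  simpa [neighborFinset_deleteEdges_right] using nbrsIn_subset_neighborFinset F b h

lemma gWeight_add_gWeight_insert_leaf (hleaf : G.neighborFinset ℓ = {p})
    {ν : V → Finset V → ℝ} (hy : ν ℓ ∅ * y = t * ν ℓ {p}) {F : Finset (Sym2 V)}
    (hF : F ⊆ (G.deleteEdges {s(ℓ, p)}).edgeFinset) :
    gWeight G ν F * t ^ #F + gWeight G ν (insert s(ℓ, p) F) * t ^ #(insert s(ℓ, p) F) =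
      gWeight (G.deleteEdges {s(ℓ, p)}) (absorbLeaf ν ℓ p y) F * t ^ #F := by
  have hℓp := (adj_of_neighborFinset_eq_singleton hleaf).ne
  have hR : ∏ k ∈ (univ.erase ℓ).erase p,
      absorbLeaf ν ℓ p y k (nbrsIn (G.deleteEdges {s(ℓ, p)}) F k) =
      ∏ k ∈ (univ.erase ℓ).erase p, ν k (nbrsIn (G.deleteEdges {s(ℓ, p)}) F k) :=
    prod_congr rfl fun k hk => by rw [absorbLeaf_of_ne ν (ne_of_mem_erase hk)]
  rw [gWeight_eq_of_le (deleteEdges_le _) hF, gWeight_insert_leaf hleaf ν hF,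
    gWeight_deleteEdges_leaf hleaf, gWeight_deleteEdges_leaf hleaf, hR, absorbLeaf_self,
    absorbLeaf_of_ne ν hℓp, card_insert_of_notMem (notMem_of_subset_edgeFinset_deleteEdges hF)]
  linear_combination (-ν p (insert ℓ (nbrsIn (G.deleteEdges {s(ℓ, p)}) F p)) * t ^ #F *
    ∏ k ∈ (univ.erase ℓ).erase p, ν k (nbrsIn (G.deleteEdges {s(ℓ, p)}) F k)) * hy

lemma gWeight_insert_leaf_eq (hleaf : G.neighborFinset ℓ = {p}) {ν : V → Finset V → ℝ}
    (hy : ν ℓ ∅ * y = t * ν ℓ {p}) (hνp : ∀ S, ν p (insert ℓ S) = ν p S)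
    {F : Finset (Sym2 V)} (hF : F ⊆ (G.deleteEdges {s(ℓ, p)}).edgeFinset) :
    gWeight G ν (insert s(ℓ, p) F) * t ^ #(insert s(ℓ, p) F) =
      y * (gWeight (G.deleteEdges {s(ℓ, p)}) ν F * t ^ #F) := by
  rw [gWeight_insert_leaf hleaf ν hF, gWeight_deleteEdges_leaf hleaf, hνp,
    card_insert_of_notMem (notMem_of_subset_edgeFinset_deleteEdges hF)]
  linear_combination (-ν p (nbrsIn (G.deleteEdges {s(ℓ, p)}) F p) * t ^ #F *
    ∏ k ∈ (univ.erase ℓ).erase p, ν k (nbrsIn (G.deleteEdges {s(ℓ, p)}) F k)) * hy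

lemma fiberWeight_deleteEdges_leaf_of_ne (hleaf : G.neighborFinset ℓ = {p})
    (hy : μ ℓ ∅ * y = t * μ ℓ {p}) {i : V} (hiℓ : i ≠ ℓ) (hip : i ≠ p) (I : Finset V) :
    fiberWeight G μ t i I = fiberWeight (G.deleteEdges {s(ℓ, p)}) (absorbLeaf μ ℓ p y) t i I := by
  rw [fiberWeight, fiberWeight, sum_filter, sum_filter,
    sum_powerset_edgeFinset_eq_sum_deleteEdges
      (e := s(ℓ, p)) (adj_of_neighborFinset_eq_singleton hleaf)]
  refine sum_congr rfl fun F hF => ?_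
  rw [mem_powerset] at hF
  rw [nbrsIn_insert_of_ne hiℓ hip, nbrsIn_eq_of_le (deleteEdges_le _) hF,
    ← absorbLeaf_update_of_ne μ hip]
  split_ifs
  · exact gWeight_add_gWeight_insert_leaf hleaf (by simpa [hiℓ.symm] using hy) hF
  · rw [add_zero]

lemma fiberWeight_deleteEdges_leaf_of_notMem (hleaf : G.neighborFinset ℓ = {p}) (y : ℝ)
    {I : Finset V} (hℓI : ℓ ∉ I) :
    fiberWeight G μ t p I = fiberWeight (G.deleteEdges {s(ℓ, p)}) (absorbLeaf μ ℓ p y) t p I := by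
  have hadj := adj_of_neighborFinset_eq_singleton hleaf
  rw [fiberWeight, fiberWeight, sum_filter, sum_filter,
    sum_powerset_edgeFinset_eq_sum_deleteEdges (e := s(ℓ, p)) hadj]
  refine sum_congr rfl fun F hF => ?_
  rw [mem_powerset] at hF
  rw [nbrsIn_insert_right hadj, nbrsIn_eq_of_le (deleteEdges_le _) hF,
    if_neg fun h : insert ℓ _ = I => hℓI (h ▸ mem_insert_self ℓ _), absorbLeaf,
    Function.update_idem, gWeight_eq_of_le (deleteEdges_le _) hF, add_zero]

lemma fiberWeight_deleteEdges_leaf_of_mem (hleaf : G.neighborFinset ℓ = {p})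
    (hy : μ ℓ ∅ * y = t * μ ℓ {p}) {I : Finset V} (hℓI : ℓ ∈ I) :
    fiberWeight G μ t p I =
      y * fiberWeight (G.deleteEdges {s(ℓ, p)}) (absorbLeaf μ ℓ p y) t p (I.erase ℓ) := by
  have hadj := adj_of_neighborFinset_eq_singleton hleaf
  rw [fiberWeight, fiberWeight, sum_filter, sum_filter, mul_sum,
    sum_powerset_edgeFinset_eq_sum_deleteEdges (e := s(ℓ, p)) hadj]
  refine sum_congr rfl fun F hF => ?_
  rw [mem_powerset] at hF
  have hℓF := left_notMem_nbrsIn_deleteEdges (G := G) ℓ p F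
  have hfiber : insert ℓ (nbrsIn (G.deleteEdges {s(ℓ, p)}) F p) = I ↔
      nbrsIn (G.deleteEdges {s(ℓ, p)}) F p = I.erase ℓ :=
    ⟨fun h => h ▸ (erase_insert hℓF).symm, fun h => h ▸ insert_erase hℓI⟩
  rw [nbrsIn_insert_right hadj, nbrsIn_eq_of_le (deleteEdges_le _) hF,
    if_neg fun h : nbrsIn _ F p = I => hℓF (h ▸ hℓI), zero_add, absorbLeaf, Function.update_idem]
  simp only [hfiber]
  split_ifs
  · exact gWeight_insert_leaf_eq hleaf (by simpa [hadj.ne] using hy) (by simp) hF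
  · rw [mul_zero]

lemma absorbLeaf_nonneg (hadj : G.Adj ℓ p) (hy : 0 ≤ y)
    (hnn : ∀ k, ∀ S ⊆ G.neighborFinset k, 0 ≤ μ k S) (k : V) {S : Finset V}
    (hS : S ⊆ (G.deleteEdges {s(ℓ, p)}).neighborFinset k) : 0 ≤ absorbLeaf μ ℓ p y k S := by
  obtain rfl | hkp := eq_or_ne k p
  · rw [neighborFinset_deleteEdges_right] at hS
    have hS' := hS.trans (erase_subset _ _)
    have hℓ : ℓ ∈ G.neighborFinset k := (mem_neighborFinset _ _ _).2 hadj.symm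
    simpa using add_nonneg (hnn k S hS') (mul_nonneg hy (hnn k _ (insert_subset hℓ hS')))
  · rw [absorbLeaf_of_ne μ hkp]
    refine hnn k S (hS.trans fun z hz => ?_)
    simp only [mem_neighborFinset, deleteEdges_adj] at hz ⊢
    exact hz.1

lemma absorbLeaf_empty_pos (hadj : G.Adj ℓ p) (hy : 0 ≤ y)
    (hnn : ∀ k, ∀ S ⊆ G.neighborFinset k, 0 ≤ μ k S) (h0 : ∀ k, 0 < μ k ∅) (k : V) :
    0 < absorbLeaf μ ℓ p y k ∅ := by
  obtain rfl | hkp := eq_or_ne k p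
  · have hℓ : {ℓ} ⊆ G.neighborFinset k := by simpa using hadj.symm
    simpa using add_pos_of_pos_of_nonneg (h0 k) (mul_nonneg hy (hnn k _ hℓ))
  · simpa [hkp] using h0 k

lemma cavOp_deleteEdges_absorbLeaf (hleaf : G.neighborFinset ℓ = {p}) (x : V → V → ℝ)
    {a b : V} (hab : (G.deleteEdges {s(ℓ, p)}).Adj a b) :
    cavOp (G.deleteEdges {s(ℓ, p)}) (absorbLeaf μ ℓ p (x ℓ p)) x a b = cavOp G μ x a b := by
  have haℓ : a ≠ ℓ := by
    rintro rfl
    simpa [neighborFinset_deleteEdges_leaf hleaf] using (mem_neighborFinset _ _ _).2 hab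
  obtain rfl | hap := eq_or_ne a p
  · have hbℓ : b ≠ ℓ := by
      rintro rfl
      simp [Sym2.eq_swap] at hab
    have hℓ : ℓ ∈ G.neighborFinset a :=
      (mem_neighborFinset _ _ _).2 (adj_of_neighborFinset_eq_singleton hleaf).symm
    rw [cavOp_eq_lGamma, cavOp_eq_lGamma, neighborFinset_deleteEdges_right, absorbLeaf_self,
      ← insert_erase hℓ, lGamma_insert (notMem_erase ℓ _) hbℓ, erase_insert (notMem_erase ℓ _)]
  · rw [cavOp_eq_lGamma, cavOp_eq_lGamma, neighborFinset_deleteEdges_of_ne haℓ hap,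
      absorbLeaf_of_ne μ hap]

end LeafPruning

section Marginal

open SimpleGraph

variable {V : Type*} [Fintype V] [DecidableEq V] {G : SimpleGraph V} [DecidableRel G.Adj]

lemma fibersFactorize_of_forall_not_adj (hG : ∀ a b, ¬G.Adj a b) {μ : V → Finset V → ℝ}
    (h0 : ∀ k, 0 < μ k ∅) (t : ℝ) (x : V → V → ℝ) (i : V) : FibersFactorize G μ t x i := by
  have hE : G.edgeFinset = ∅ := by
    ext e
    induction e using Sym2.ind
    simp [hG]
  have hnbrs : ∀ k, nbrsIn G ∅ k = ∅ := fun k => by simp [nbrsIn]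
  refine ⟨?_, fun I hI => ?_⟩
  · rw [fiberWeight, hE, powerset_empty, filter_singleton, if_pos (hnbrs i), sum_singleton,
      card_empty, pow_zero, mul_one, gWeight]
    refine prod_pos fun k _ => ?_
    rw [hnbrs k]
    obtain rfl | hki := eq_or_ne k i
    · simp
    · simpa [hki] using h0 k
  · rw [subset_empty.1 (hI.trans fun j hj => absurd ((mem_neighborFinset _ _ _).1 hj) (hG i j)),
      prod_empty, mul_one]

lemma FibersFactorize.of_deleteEdges_leaf_of_ne {ℓ p : V} (hleaf : G.neighborFinset ℓ = {p})
    {μ : V → Finset V → ℝ} {t : ℝ} {x : V → V → ℝ} (hy : μ ℓ ∅ * x ℓ p = t * μ ℓ {p}) {i : V}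
    (hiℓ : i ≠ ℓ) (hip : i ≠ p)
    (h : FibersFactorize (G.deleteEdges {s(ℓ, p)}) (absorbLeaf μ ℓ p (x ℓ p)) t x i) :
    FibersFactorize G μ t x i := by
  simp only [FibersFactorize, ← fiberWeight_deleteEdges_leaf_of_ne hleaf hy hiℓ hip,
    neighborFinset_deleteEdges_of_ne hiℓ hip] at h
  exact h

lemma FibersFactorize.of_deleteEdges_leaf_self {ℓ p : V} (hleaf : G.neighborFinset ℓ = {p})
    {μ : V → Finset V → ℝ} {t : ℝ} {x : V → V → ℝ} (hy : μ ℓ ∅ * x ℓ p = t * μ ℓ {p})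
    (h : FibersFactorize (G.deleteEdges {s(ℓ, p)}) (absorbLeaf μ ℓ p (x ℓ p)) t x p) :
    FibersFactorize G μ t x p := by
  obtain ⟨hpos, hprod⟩ := h
  have hempty := fiberWeight_deleteEdges_leaf_of_notMem (μ := μ) (t := t) hleaf (x ℓ p)
    (notMem_empty ℓ)
  refine ⟨hempty ▸ hpos, fun I hI => ?_⟩
  have hI' : I.erase ℓ ⊆ (G.deleteEdges {s(ℓ, p)}).neighborFinset p := by
    rw [neighborFinset_deleteEdges_right]
    exact erase_subset_erase ℓ hI
  by_cases hℓI : ℓ ∈ I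
  · rw [fiberWeight_deleteEdges_leaf_of_mem hleaf hy hℓI, hprod _ hI', hempty,
      ← mul_prod_erase I _ hℓI]
    ring
  · rw [erase_eq_of_notMem hℓI] at hI'
    rw [fiberWeight_deleteEdges_leaf_of_notMem hleaf (x ℓ p) hℓI, hprod _ hI', hempty]

theorem fibersFactorize (G : SimpleGraph V) [DecidableRel G.Adj] (hG : G.IsAcyclic)
    (μ : V → Finset V → ℝ) (hnn : ∀ k, ∀ S ⊆ G.neighborFinset k, 0 ≤ μ k S)
    (h0 : ∀ k, 0 < μ k ∅) (t : ℝ) (x : V → V → ℝ) (hxnn : ∀ a b, 0 ≤ x a b)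
    (hx : ∀ a b, G.Adj a b → x a b = t * cavOp G μ x a b) (i : V) :
    FibersFactorize G μ t x i := by
  by_cases hE : ∃ a b, G.Adj a b
  swap
  · push Not at hE
    exact fibersFactorize_of_forall_not_adj hE h0 t x i
  obtain ⟨a, b, hab⟩ := hE
  obtain ⟨ℓ, p, hℓi, hleaf⟩ := hG.exists_leaf_ne hab i
  have hadj := adj_of_neighborFinset_eq_singleton hleaf
  have hy : μ ℓ ∅ * x ℓ p = t * μ ℓ {p} := by
    rw [hx ℓ p hadj, cavOp_of_neighborFinset_eq_singleton hleaf]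
    field_simp [(h0 ℓ).ne']
  have h := fibersFactorize (G.deleteEdges {s(ℓ, p)}) (hG.anti (deleteEdges_le _))
    (absorbLeaf μ ℓ p (x ℓ p)) (fun k _ => absorbLeaf_nonneg hadj (hxnn ℓ p) hnn k)
    (absorbLeaf_empty_pos hadj (hxnn ℓ p) hnn h0) t x hxnn
    (fun a b hab => by rw [cavOp_deleteEdges_absorbLeaf hleaf x hab, hx a b (deleteEdges_le _ hab)])
    i
  obtain rfl | hip := eq_or_ne i p
  · exact h.of_deleteEdges_leaf_self hleaf hy
  · exact h.of_deleteEdges_leaf_of_ne hleaf hy hℓi.symm hip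
termination_by #G.edgeFinset
decreasing_by
  rw [edgeFinset_deleteEdges_singleton]
  exact card_erase_lt_of_mem (mem_edgeFinset.2 hadj)

lemma sum_gWeight_filter_nbrsIn_eq (μ : V → Finset V → ℝ) (t : ℝ) (i : V) (I : Finset V) :
    ∑ F ∈ G.edgeFinset.powerset with nbrsIn G F i = I, gWeight G μ F * t ^ #F =
      μ i I * fiberWeight G μ t i I := by
  rw [fiberWeight, mul_sum]
  refine sum_congr rfl fun F hF => ?_
  rw [gWeight_eq_mul_gWeight_update μ i, (mem_filter.1 hF).2, mul_assoc]

lemma gProb_nbrsIn_eq (μ : V → Finset V → ℝ) (t : ℝ) (i : V) (I : Finset V) :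
    gProb G μ t (fun F => nbrsIn G F i = I) = μ i I * fiberWeight G μ t i I /
      ∑ J ∈ (G.neighborFinset i).powerset, μ i J * fiberWeight G μ t i J := by
  rw [gProb, filter_congr_decidable, sum_gWeight_filter_nbrsIn_eq, ZG, ← sum_fiberwise_of_maps_to
    (g := fun F => nbrsIn G F i) (t := (G.neighborFinset i).powerset)
    fun F _ => mem_powerset.2 (nbrsIn_subset_neighborFinset F i)]
  simp only [sum_gWeight_filter_nbrsIn_eq]

end Marginal

theorem stmt7_general {V : Type*} [Fintype V] [DecidableEq V] (G : SimpleGraph V)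
    [DecidableRel G.Adj] (hac : G.IsAcyclic) (μ : V → Finset V → ℝ)
    (hnn : ∀ i : V, ∀ S ∈ (G.neighborFinset i).powerset, 0 ≤ μ i S)
    (h0 : ∀ i : V, 0 < μ i ∅) (t : ℝ)
    (x : V → V → ℝ) (hxnn : ∀ i j, 0 ≤ x i j)
    (hx : ∀ i j, G.Adj i j → x i j = t * cavOp G μ x i j)
    (i : V) (I : Finset V) (hI : I ⊆ G.neighborFinset i) :
    gProb G μ t (fun F => nbrsIn G F i = I) =
      μ i I * (∏ j ∈ I, x j i) /
        ∑ J ∈ (G.neighborFinset i).powerset, μ i J * ∏ j ∈ J, x j i := by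
  obtain ⟨hpos, hprod⟩ := fibersFactorize G hac μ
    (fun k S hS => hnn k S (mem_powerset.2 hS)) h0 t x hxnn hx i
  rw [gProb_nbrsIn_eq, hprod I hI,
    sum_congr rfl fun J hJ => by rw [hprod J (mem_powerset.1 hJ), mul_left_comm], ← mul_sum,
    mul_left_comm, mul_div_mul_left _ _ hpos.ne']

/-- on a finite acyclic network, the Gibbs--Boltzmann marginal of
`𝓕 ∩ E_i` is obtained from `μ_i` by imposing the external field `(x_{j→i}(t))_{j∈∂i}`,
where `x(t)` solves the cavity equation. -/
theorem stmt7 {V : Type*} [Fintype V] [DecidableEq V] (G : SimpleGraph V)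
    [DecidableRel G.Adj] (hac : G.IsAcyclic) (μ : V → Finset V → ℝ)
    (hnn : ∀ i : V, ∀ S ∈ (G.neighborFinset i).powerset, 0 ≤ μ i S)
    (h0 : ∀ i : V, 0 < μ i ∅) (t : ℝ) (ht : 0 < t)
    (x : V → V → ℝ) (hxnn : ∀ i j, 0 ≤ x i j)
    (hx : ∀ i j, G.Adj i j → x i j = t * cavOp G μ x i j)
    (i : V) (I : Finset V) (hI : I ⊆ G.neighborFinset i) :
    gProb G μ t (fun F => nbrsIn G F i = I) =
      μ i I * (∏ j ∈ I, x j i) /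
        ∑ J ∈ (G.neighborFinset i).powerset, μ i J * ∏ j ∈ J, x j i :=
  stmt7_general G hac μ hnn h0 t x hxnn hx i I hI
end

section
/- Spatial Markov property: let G = (V,E) be a finite network, t > 0 with Z(G;t) > 0, S ⊆ V a set of vertices, ∂S the set of edges with exactly one endpoint in S, and B ⊆ ∂S a boundary condition such that the partition functions Z(S|B;t) and Z(S^c|B;t) are positive. Then every F ⊆ E with F ∩ ∂S = B decomposes uniquely as F = F_int ⊔ B ⊔ F_ext with F_int ⊆ E(S) and F_ext ⊆ E(S^c), and P^t_G(𝓕 = F) = P^t_{S|B}(𝓕 = F_int) · P^t_G(𝓕 ∩ ∂S = B) · P^t_{S^c|B}(𝓕 = F_ext). In particular, conditionally on 𝓕 ∩ ∂S = B (when this event has positive probability), the restrictions 𝓕 ∩ E(S) and 𝓕 ∩ E(S^c) are independent with respective laws P^t_{S|B} and P^t_{S^c|B}. -/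
open Finset Filter
open scoped Classical ENNReal

section SpatialMarkov

variable {V : Type*} [Fintype V] [DecidableEq V]

/-- Edges of `G` with exactly one endpoint in `S` (the boundary `∂S`). -/
noncomputable def bdryEdges (G : SimpleGraph V) [DecidableRel G.Adj] (S : Finset V) :
    Finset (Sym2 V) :=
  G.edgeFinset.filter (fun e => ∃ i ∈ S, ∃ j, j ∉ S ∧ e = s(i, j))

/-- Edges of `G` with both endpoints in `S` (the edge set `E(S)` of the induced subgraph). -/
noncomputable def inEdges (G : SimpleGraph V) [DecidableRel G.Adj] (S : Finset V) :
    Finset (Sym2 V) :=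
  G.edgeFinset.filter (fun e => ∀ v ∈ e, v ∈ S)

/-- Global weight, in the network `S|B` with boundary condition `B ⊆ ∂S`, of a spanning
subgraph `F ⊆ E(S)` : each vertex `i ∈ S` carries the local measure
`μ^B_i(·) = μ_i(· ∪ (B ∩ E_i))`. -/
noncomputable def condWeight (G : SimpleGraph V) [DecidableRel G.Adj]
    (μ : V → Finset V → ℝ) (S : Finset V) (B : Finset (Sym2 V)) (F : Finset (Sym2 V)) : ℝ :=
  ∏ i ∈ S, μ i (nbrsIn G F i ∪ (G.neighborFinset i).filter (fun k => s(i, k) ∈ B))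

/-- Partition function of the network `S|B` at activity `t`. -/
noncomputable def condZ (G : SimpleGraph V) [DecidableRel G.Adj]
    (μ : V → Finset V → ℝ) (S : Finset V) (B : Finset (Sym2 V)) (t : ℝ) : ℝ :=
  ∑ F ∈ (inEdges G S).powerset, condWeight G μ S B F * t ^ F.card

/-- Gibbs--Boltzmann probability, in the network `S|B`, of the spanning subgraph `F`. -/
noncomputable def condProb (G : SimpleGraph V) [DecidableRel G.Adj]
    (μ : V → Finset V → ℝ) (S : Finset V) (B : Finset (Sym2 V)) (t : ℝ)
    (F : Finset (Sym2 V)) : ℝ :=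
  condWeight G μ S B F * t ^ F.card / condZ G μ S B t

/-!
Every edge of `G` lies in exactly one of `E(S)`, `∂S`, `E(Sᶜ)`, and the local measure at a
vertex of `S` (resp. `Sᶜ`) only sees edges of `E(S) ∪ ∂S` (resp. `E(Sᶜ) ∪ ∂S`). Hence
`F ↦ (F ∩ E(S), F ∩ E(Sᶜ))` is a bijection from `{F ⊆ E : F ∩ ∂S = B}` onto
`2^E(S) × 2^E(Sᶜ)`, along which `μ(F) t^|F|` factorises as the weight of `F ∩ E(S)` in `S|B`,
times `t^|B|`, times the weight of `F ∩ E(Sᶜ)` in `Sᶜ|B`. Summing gives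
`P(𝓕 ∩ ∂S = B) = Z(S|B) t^|B| Z(Sᶜ|B) / Z(G)`, and dividing yields the factorisation.
-/

section Decomposition

variable {G : SimpleGraph V} [DecidableRel G.Adj] {S : Finset V}

@[simp]
lemma mk_mem_inEdges {a b : V} : s(a, b) ∈ inEdges G S ↔ G.Adj a b ∧ a ∈ S ∧ b ∈ S := by
  simp [inEdges]

@[simp]
lemma mk_mem_bdryEdges {a b : V} :
    s(a, b) ∈ bdryEdges G S ↔ G.Adj a b ∧ (a ∈ S ∧ b ∉ S ∨ b ∈ S ∧ a ∉ S) := by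
  simp only [bdryEdges, mem_filter, SimpleGraph.mem_edgeFinset, SimpleGraph.mem_edgeSet,
    Sym2.eq_iff]
  constructor
  · rintro ⟨hab, i, hi, j, hj, ⟨rfl, rfl⟩ | ⟨rfl, rfl⟩⟩ <;> tauto
  · rintro ⟨hab, ⟨ha, hb⟩ | ⟨hb, ha⟩⟩
    · exact ⟨hab, a, ha, b, hb, Or.inl ⟨rfl, rfl⟩⟩
    · exact ⟨hab, b, hb, a, ha, Or.inr ⟨rfl, rfl⟩⟩

lemma mem_inEdges_or_mem_bdryEdges_or_mem_inEdges_compl {e : Sym2 V} (he : e ∈ G.edgeFinset) :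
    e ∈ inEdges G S ∨ e ∈ bdryEdges G S ∨ e ∈ inEdges G Sᶜ := by
  induction e using Sym2.ind
  simp only [SimpleGraph.mem_edgeFinset, SimpleGraph.mem_edgeSet] at he
  simp only [mk_mem_inEdges, mk_mem_bdryEdges, mem_compl, he, true_and]
  tauto

variable (G S)

lemma disjoint_inEdges_bdryEdges : Disjoint (inEdges G S) (bdryEdges G S) := by
  rw [disjoint_left]
  intro e
  induction e using Sym2.ind
  simp only [mk_mem_inEdges, mk_mem_bdryEdges]
  tauto

lemma disjoint_bdryEdges_inEdges_compl : Disjoint (bdryEdges G S) (inEdges G Sᶜ) := by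
  rw [disjoint_left]
  intro e
  induction e using Sym2.ind
  simp only [mk_mem_inEdges, mk_mem_bdryEdges, mem_compl]
  tauto

lemma disjoint_inEdges_inEdges_compl : Disjoint (inEdges G S) (inEdges G Sᶜ) := by
  rw [disjoint_left]
  intro e
  induction e using Sym2.ind
  simp only [mk_mem_inEdges, mem_compl]
  tauto

end Decomposition

section Gluing

variable {G : SimpleGraph V} [DecidableRel G.Adj] {S : Finset V} {P B Q : Finset (Sym2 V)}

lemma nbrsIn_union (F F' : Finset (Sym2 V)) (i : V) :
    nbrsIn G (F ∪ F') i = nbrsIn G F i ∪ nbrsIn G F' i := by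
  simp only [nbrsIn, mem_union, filter_or]

lemma nbrsIn_eq_empty_of_subset_inEdges {T : Finset V} {F : Finset (Sym2 V)} {i : V}
    (hF : F ⊆ inEdges G T) (hi : i ∉ T) : nbrsIn G F i = ∅ := by
  refine filter_eq_empty_iff.2 fun k _ hk => hi ?_
  exact (mk_mem_inEdges.1 (hF hk)).2.1

lemma gWeight_union_union (μ : V → Finset V → ℝ) (hP : P ⊆ inEdges G S)
    (hQ : Q ⊆ inEdges G Sᶜ) :
    gWeight G μ (P ∪ B ∪ Q) = condWeight G μ S B P * condWeight G μ Sᶜ B Q := by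
  rw [gWeight, ← prod_mul_prod_compl S]
  congr 1 <;> refine prod_congr rfl fun i hi => ?_ <;> simp only [nbrsIn_union]
  · rw [nbrsIn_eq_empty_of_subset_inEdges hQ (notMem_compl.2 hi), union_empty]
    rfl
  · rw [nbrsIn_eq_empty_of_subset_inEdges hP (mem_compl.1 hi), empty_union, union_comm]
    rfl

lemma card_union_union (hP : P ⊆ inEdges G S) (hB : B ⊆ bdryEdges G S)
    (hQ : Q ⊆ inEdges G Sᶜ) : (P ∪ B ∪ Q).card = P.card + B.card + Q.card := by
  have hPB := (disjoint_inEdges_bdryEdges G S).mono hP hB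
  have hPQ := (disjoint_inEdges_inEdges_compl G S).mono hP hQ
  have hBQ := (disjoint_bdryEdges_inEdges_compl G S).mono hB hQ
  rw [card_union_of_disjoint (disjoint_union_left.2 ⟨hPQ, hBQ⟩), card_union_of_disjoint hPB]

lemma union_union_inter_inEdges (hP : P ⊆ inEdges G S) (hB : B ⊆ bdryEdges G S)
    (hQ : Q ⊆ inEdges G Sᶜ) : (P ∪ B ∪ Q) ∩ inEdges G S = P := by
  rw [union_inter_distrib_right, union_inter_distrib_right, inter_eq_left.2 hP,
    disjoint_iff_inter_eq_empty.1 ((disjoint_inEdges_bdryEdges G S).mono_right hB).symm,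
    disjoint_iff_inter_eq_empty.1 ((disjoint_inEdges_inEdges_compl G S).mono_right hQ).symm,
    union_empty, union_empty]

lemma union_union_inter_bdryEdges (hP : P ⊆ inEdges G S) (hB : B ⊆ bdryEdges G S)
    (hQ : Q ⊆ inEdges G Sᶜ) : (P ∪ B ∪ Q) ∩ bdryEdges G S = B := by
  rw [union_inter_distrib_right, union_inter_distrib_right, inter_eq_left.2 hB,
    disjoint_iff_inter_eq_empty.1 ((disjoint_inEdges_bdryEdges G S).mono_left hP),
    disjoint_iff_inter_eq_empty.1 ((disjoint_bdryEdges_inEdges_compl G S).mono_right hQ).symm,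
    empty_union, union_empty]

lemma union_union_inter_inEdges_compl (hP : P ⊆ inEdges G S) (hB : B ⊆ bdryEdges G S)
    (hQ : Q ⊆ inEdges G Sᶜ) : (P ∪ B ∪ Q) ∩ inEdges G Sᶜ = Q := by
  rw [union_inter_distrib_right, union_inter_distrib_right, inter_eq_left.2 hQ,
    disjoint_iff_inter_eq_empty.1 ((disjoint_inEdges_inEdges_compl G S).mono_left hP),
    disjoint_iff_inter_eq_empty.1 ((disjoint_bdryEdges_inEdges_compl G S).mono_left hB),
    empty_union, empty_union]

lemma union_union_subset_edgeFinset (hP : P ⊆ inEdges G S) (hB : B ⊆ bdryEdges G S)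
    (hQ : Q ⊆ inEdges G Sᶜ) : P ∪ B ∪ Q ⊆ G.edgeFinset :=
  union_subset (union_subset (hP.trans (filter_subset _ _)) (hB.trans (filter_subset _ _)))
    (hQ.trans (filter_subset _ _))

lemma eq_inter_inEdges_union_union_inter_inEdges_compl {F : Finset (Sym2 V)}
    (hF : F ⊆ G.edgeFinset) (hFB : F ∩ bdryEdges G S = B) :
    F = (F ∩ inEdges G S) ∪ B ∪ (F ∩ inEdges G Sᶜ) := by
  subst hFB
  ext e
  simp only [mem_union, mem_inter]
  constructor
  · intro he
    rcases mem_inEdges_or_mem_bdryEdges_or_mem_inEdges_compl (S := S) (hF he) with h | h | h <;>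
      tauto
  · tauto

lemma eq_union_union_iff_inter_eq {F : Finset (Sym2 V)} (hF : F ⊆ G.edgeFinset)
    (hP : P ⊆ inEdges G S) (hB : B ⊆ bdryEdges G S) (hQ : Q ⊆ inEdges G Sᶜ) :
    F = P ∪ B ∪ Q ↔
      F ∩ inEdges G S = P ∧ F ∩ bdryEdges G S = B ∧ F ∩ inEdges G Sᶜ = Q := by
  constructor
  · rintro rfl
    exact ⟨union_union_inter_inEdges hP hB hQ, union_union_inter_bdryEdges hP hB hQ,
      union_union_inter_inEdges_compl hP hB hQ⟩
  · rintro ⟨rfl, hFB, rfl⟩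
    exact eq_inter_inEdges_union_union_inter_inEdges_compl hF hFB

end Gluing

section Factorization

variable {G : SimpleGraph V} [DecidableRel G.Adj] {μ : V → Finset V → ℝ} {t : ℝ} {S : Finset V}
  {P B Q : Finset (Sym2 V)}

lemma gProb_congr {p q : Finset (Sym2 V) → Prop} (h : ∀ F ⊆ G.edgeFinset, p F ↔ q F) :
    gProb G μ t p = gProb G μ t q := by
  rw [gProb, gProb, filter_congr fun F hF => h F (mem_powerset.1 hF)]

lemma gProb_eq_gWeight {F : Finset (Sym2 V)} (hF : F ⊆ G.edgeFinset) :
    gProb G μ t (fun F' => F' = F) = gWeight G μ F * t ^ F.card / ZG G μ t := by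
  rw [gProb, sum_eq_single_of_mem F ?_ ?_]
  · simpa using hF
  · intro _ hF' hne
    simp only [mem_filter] at hF'
    exact (hne hF'.2).elim

lemma gWeight_mul_pow_union_union (hP : P ⊆ inEdges G S) (hB : B ⊆ bdryEdges G S)
    (hQ : Q ⊆ inEdges G Sᶜ) :
    gWeight G μ (P ∪ B ∪ Q) * t ^ (P ∪ B ∪ Q).card =
      condWeight G μ S B P * t ^ P.card * t ^ B.card * (condWeight G μ Sᶜ B Q * t ^ Q.card) := by
  rw [gWeight_union_union μ hP hQ, card_union_union hP hB hQ]
  ring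

lemma sum_filter_inter_bdryEdges_eq (hB : B ⊆ bdryEdges G S) :
    ∑ F ∈ G.edgeFinset.powerset.filter (· ∩ bdryEdges G S = B), gWeight G μ F * t ^ F.card =
      condZ G μ S B t * t ^ B.card * condZ G μ Sᶜ B t := by
  rw [condZ, condZ, sum_mul, sum_mul_sum, ← sum_product']
  refine sum_nbij' (fun F => (F ∩ inEdges G S, F ∩ inEdges G Sᶜ))
    (fun PQ => PQ.1 ∪ B ∪ PQ.2) ?_ ?_ ?_ ?_ ?_
  · intro F hF
    simp only [mem_product, mem_powerset]
    exact ⟨inter_subset_right, inter_subset_right⟩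
  · intro PQ hPQ
    rw [mem_product, mem_powerset, mem_powerset] at hPQ
    rw [mem_filter, mem_powerset]
    exact ⟨union_union_subset_edgeFinset hPQ.1 hB hPQ.2,
      union_union_inter_bdryEdges hPQ.1 hB hPQ.2⟩
  · intro F hF
    rw [mem_filter, mem_powerset] at hF
    exact (eq_inter_inEdges_union_union_inter_inEdges_compl hF.1 hF.2).symm
  · intro PQ hPQ
    rw [mem_product, mem_powerset, mem_powerset] at hPQ
    exact Prod.ext (union_union_inter_inEdges hPQ.1 hB hPQ.2)
      (union_union_inter_inEdges_compl hPQ.1 hB hPQ.2)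
  · intro F hF
    rw [mem_filter, mem_powerset] at hF
    rw [← gWeight_mul_pow_union_union inter_subset_right hB inter_subset_right,
      ← eq_inter_inEdges_union_union_inter_inEdges_compl hF.1 hF.2]

lemma gProb_inter_bdryEdges_eq (hB : B ⊆ bdryEdges G S) :
    gProb G μ t (fun F => F ∩ bdryEdges G S = B) =
      condZ G μ S B t * t ^ B.card * condZ G μ Sᶜ B t / ZG G μ t := by
  rw [gProb, ← sum_filter_inter_bdryEdges_eq hB]
  -- the two filters differ only in their decidability instances
  congr!

lemma gProb_eq_union_union (hP : P ⊆ inEdges G S) (hB : B ⊆ bdryEdges G S)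
    (hQ : Q ⊆ inEdges G Sᶜ) (hZS : condZ G μ S B t ≠ 0) (hZSc : condZ G μ Sᶜ B t ≠ 0) :
    gProb G μ t (fun F => F = P ∪ B ∪ Q) =
      condProb G μ S B t P * gProb G μ t (fun F => F ∩ bdryEdges G S = B) *
        condProb G μ Sᶜ B t Q := by
  rw [gProb_eq_gWeight (union_union_subset_edgeFinset hP hB hQ), gWeight_mul_pow_union_union hP hB hQ, gProb_inter_bdryEdges_eq hB,
    condProb, condProb]
  field_simp

end Factorization

theorem stmt9_general (G : SimpleGraph V) [DecidableRel G.Adj] (μ : V → Finset V → ℝ)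
    (t : ℝ) (S : Finset V) (B : Finset (Sym2 V)) (hB : B ⊆ bdryEdges G S)
    (hZS : 0 < condZ G μ S B t) (hZSc : 0 < condZ G μ Sᶜ B t) :
    (∀ F ⊆ G.edgeFinset, F ∩ bdryEdges G S = B →
      (F = (F ∩ inEdges G S) ∪ B ∪ (F ∩ inEdges G Sᶜ) ∧
        Disjoint (F ∩ inEdges G S) B ∧
        Disjoint (F ∩ inEdges G S) (F ∩ inEdges G Sᶜ) ∧
        Disjoint B (F ∩ inEdges G Sᶜ)) ∧
      gProb G μ t (fun F' => F' = F) =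
        condProb G μ S B t (F ∩ inEdges G S) *
          gProb G μ t (fun F' => F' ∩ bdryEdges G S = B) *
          condProb G μ Sᶜ B t (F ∩ inEdges G Sᶜ)) ∧
    (∀ Fint ∈ (inEdges G S).powerset, ∀ Fext ∈ (inEdges G Sᶜ).powerset,
      0 < gProb G μ t (fun F' => F' ∩ bdryEdges G S = B) →
      gProb G μ t (fun F' =>
          F' ∩ inEdges G S = Fint ∧ F' ∩ bdryEdges G S = B ∧ F' ∩ inEdges G Sᶜ = Fext) /
        gProb G μ t (fun F' => F' ∩ bdryEdges G S = B) =
      condProb G μ S B t Fint * condProb G μ Sᶜ B t Fext) := by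
  refine ⟨fun F hF hFB => ?_, fun Fint hFint Fext hFext hpos => ?_⟩
  · have hP : F ∩ inEdges G S ⊆ inEdges G S := inter_subset_right
    have hQ : F ∩ inEdges G Sᶜ ⊆ inEdges G Sᶜ := inter_subset_right
    have hFactor := gProb_eq_union_union (μ := μ) (t := t) hP hB hQ hZS.ne' hZSc.ne'
    rw [← eq_inter_inEdges_union_union_inter_inEdges_compl hF hFB] at hFactor
    exact ⟨⟨eq_inter_inEdges_union_union_inter_inEdges_compl hF hFB,
      (disjoint_inEdges_bdryEdges G S).mono hP hB,
      (disjoint_inEdges_inEdges_compl G S).mono hP hQ,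
      (disjoint_bdryEdges_inEdges_compl G S).mono hB hQ⟩, hFactor⟩
  · rw [mem_powerset] at hFint hFext
    rw [gProb_congr fun F hF => (eq_union_union_iff_inter_eq hF hFint hB hFext).symm,
      gProb_eq_union_union hFint hB hFext hZS.ne' hZSc.ne', mul_right_comm,
      mul_div_cancel_right₀ _ hpos.ne']

/-- the spatial Markov property. -/
theorem stmt9 (G : SimpleGraph V) [DecidableRel G.Adj] (μ : V → Finset V → ℝ)
    (hnn : ∀ i : V, ∀ T ∈ (G.neighborFinset i).powerset, 0 ≤ μ i T)
    (t : ℝ) (ht : 0 < t) (S : Finset V) (B : Finset (Sym2 V)) (hB : B ⊆ bdryEdges G S)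
    (hZ : 0 < ZG G μ t) (hZS : 0 < condZ G μ S B t) (hZSc : 0 < condZ G μ Sᶜ B t) :
    (∀ F ⊆ G.edgeFinset, F ∩ bdryEdges G S = B →
      (F = (F ∩ inEdges G S) ∪ B ∪ (F ∩ inEdges G Sᶜ) ∧
        Disjoint (F ∩ inEdges G S) B ∧
        Disjoint (F ∩ inEdges G S) (F ∩ inEdges G Sᶜ) ∧
        Disjoint B (F ∩ inEdges G Sᶜ)) ∧
      gProb G μ t (fun F' => F' = F) =
        condProb G μ S B t (F ∩ inEdges G S) *
          gProb G μ t (fun F' => F' ∩ bdryEdges G S = B) *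
          condProb G μ Sᶜ B t (F ∩ inEdges G Sᶜ)) ∧
    (∀ Fint ∈ (inEdges G S).powerset, ∀ Fext ∈ (inEdges G Sᶜ).powerset,
      0 < gProb G μ t (fun F' => F' ∩ bdryEdges G S = B) →
      gProb G μ t (fun F' =>
          F' ∩ inEdges G S = Fint ∧ F' ∩ bdryEdges G S = B ∧ F' ∩ inEdges G Sᶜ = Fext) /
        gProb G μ t (fun F' => F' ∩ bdryEdges G S = B) =
      condProb G μ S B t Fint * condProb G μ Sᶜ B t Fext) :=
  stmt9_general G μ t S B hB hZS hZSc

end SpatialMarkov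
end
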